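/- arXiv:2602.09908 — 6 statements merged into one kernel-verified Lean document; each statement's English description precedes it below -/
import Mathlib

section
/- If M is a maximal partial Latin square of order n > 1 with exactly ⌈n²/2⌉ filled cells, then the minimum frequency m (the minimum over all rows, columns and entries of the number of occurrences) satisfies m = ⌊n/2⌋. -/
/-- A partial Latin square of order `n`: each symbol appears at most once
in every row and at most once in every column. -/
def IsPLS {n : ℕ} (M : Fin n → Fin n → Option (Fin n)) : Prop :=
  (∀ r c c' s, M r c = some s → M r c' = some s → c = c') ∧
  (∀ r r' c s, M r c = some s → M r' c = some s → r = r')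

/-- A maximal partial Latin square: no empty cell can be filled. -/
def IsMaximalPLS {n : ℕ} (M : Fin n → Fin n → Option (Fin n)) : Prop :=
  IsPLS M ∧ ∀ r c (s : Fin n), M r c = none →
    ¬ IsPLS (fun r' c' => if r' = r ∧ c' = c then some s else M r' c')

/-- Number of filled cells. -/
def plsSize {n : ℕ} (M : Fin n → Fin n → Option (Fin n)) : ℕ :=
  (Finset.univ.filter (fun rc : Fin n × Fin n => (M rc.1 rc.2).isSome)).card

def plsRowFreq {n : ℕ} (M : Fin n → Fin n → Option (Fin n)) (r : Fin n) : ℕ :=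
  (Finset.univ.filter (fun c : Fin n => (M r c).isSome)).card

def plsColFreq {n : ℕ} (M : Fin n → Fin n → Option (Fin n)) (c : Fin n) : ℕ :=
  (Finset.univ.filter (fun r : Fin n => (M r c).isSome)).card

def plsSymFreq {n : ℕ} (M : Fin n → Fin n → Option (Fin n)) (s : Fin n) : ℕ :=
  (Finset.univ.filter (fun rc : Fin n × Fin n => M rc.1 rc.2 = some s)).card

/-! In a maximal partial Latin square every symbol occurs in the row or in the column of each
empty cell, since otherwise it could be placed there; so for the row and column frequencies
`R` and `C`, an empty cell `(r, c)` has `R r + C c ≥ n`. Summing over the `⌊n²/2⌋` empty cells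
gives `n ⌊n²/2⌋ ≤ ∑ r, R r (n - R r) + ∑ c, C c (n - C c)`, while each summand is at most
`⌊n²/4⌋`; hence every summand equals `⌊n²/4⌋`, which pins every row and column frequency between
`⌊n/2⌋` and `⌈n/2⌉`. A symbol occurring `h < ⌊n/2⌋` times misses some row `r`, and every empty cell
of `r` lies in one of the `h` columns of that symbol, so `R r ≥ n - h > ⌈n/2⌉`. Finally the rows
carry `⌈n²/2⌉ < n (⌊n/2⌋ + 1)` filled cells, so some row has frequency exactly `⌊n/2⌋`. -/

open Finset

theorem Nat.mul_sub_le_sq_div_four (a m : ℕ) : a * (m - a) ≤ m ^ 2 / 4 := by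
  rcases le_or_gt a m with ham | hma
  · obtain ⟨b, rfl⟩ := Nat.exists_eq_add_of_le ham
    rw [Nat.le_div_iff_mul_le four_pos, Nat.add_sub_cancel_left]
    nlinarith [sq_nonneg ((a : ℤ) - b)]
  · simp [Nat.sub_eq_zero_of_le hma.le]

theorem Nat.div_two_le_of_sq_div_four_le {a m : ℕ} (h : m ^ 2 / 4 ≤ a * (m - a)) : m / 2 ≤ a := by
  by_contra! ha
  obtain ⟨k, rfl | rfl⟩ := Nat.even_or_odd' m
  · obtain ⟨d, rfl⟩ : ∃ d, k = a + d + 1 := ⟨k - a - 1, by omega⟩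
    rw [show 2 * (a + d + 1) - a = a + 2 * d + 2 by omega] at h
    ring_nf at h
    omega
  · obtain ⟨d, rfl⟩ : ∃ d, k = a + d + 1 := ⟨k - a - 1, by omega⟩
    rw [show 2 * (a + d + 1) + 1 - a = a + 2 * d + 3 by omega] at h
    ring_nf at h
    omega

theorem Nat.le_sub_div_two_of_sq_div_four_le {a m : ℕ} (ha : a ≤ m)
    (h : m ^ 2 / 4 ≤ a * (m - a)) : a ≤ m - m / 2 := by
  have := @Nat.div_two_le_of_sq_div_four_le (m - a) m (by rwa [Nat.sub_sub_self ha, mul_comm])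
  omega

theorem Nat.sum_mul_sub_le {ι : Type*} [Fintype ι] (f : ι → ℕ) (m : ℕ) :
    ∑ i, f i * (m - f i) ≤ Fintype.card ι * (m ^ 2 / 4) := by
  simpa using sum_le_sum fun i (_ : i ∈ univ) => Nat.mul_sub_le_sq_div_four (f i) m

theorem Nat.mul_sub_eq_sq_div_four_of_le_sum {ι : Type*} [Fintype ι] {f : ι → ℕ} {m : ℕ}
    (h : Fintype.card ι * (m ^ 2 / 4) ≤ ∑ i, f i * (m - f i)) (i : ι) :
    f i * (m - f i) = m ^ 2 / 4 :=
  (sum_eq_sum_iff_of_le fun i _ => Nat.mul_sub_le_sq_div_four (f i) m).1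
    (by simpa using (Nat.sum_mul_sub_le f m).antisymm h) i (mem_univ i)

theorem Nat.sq_sub_sq_add_one_div_two (n : ℕ) : n ^ 2 - (n ^ 2 + 1) / 2 = n ^ 2 / 4 + n ^ 2 / 4 := by
  obtain ⟨k, rfl | rfl⟩ := Nat.even_or_odd' n <;> ring_nf <;> omega

theorem Nat.sq_add_one_div_two_lt {n : ℕ} (hn : 1 < n) : (n ^ 2 + 1) / 2 < n * (n / 2 + 1) := by
  obtain ⟨k, rfl | rfl⟩ := Nat.even_or_odd' n
  · rw [Nat.mul_div_cancel_left k two_pos]; ring_nf; omega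
  · rw [show (2 * k + 1) / 2 = k by omega]; ring_nf; omega

variable {n : ℕ} {M : Fin n → Fin n → Option (Fin n)} {r c s : Fin n}

theorem IsPLS.update (hM : IsPLS M) (hr : ∀ c', M r c' ≠ some s) (hc : ∀ r', M r' c ≠ some s) :
    IsPLS (fun r' c' => if r' = r ∧ c' = c then some s else M r' c') := by
  constructor
  · intro a b b' t hb hb'
    dsimp only at hb hb'
    split_ifs at hb hb' with h₁ h₂ h₂
    · exact h₁.2.trans h₂.2.symm
    · cases hb; exact absurd (h₁.1 ▸ hb') (hr b')
    · cases hb'; exact absurd (h₂.1 ▸ hb) (hr b)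
    · exact hM.1 a b b' t hb hb'
  · intro a a' b t hb hb'
    dsimp only at hb hb'
    split_ifs at hb hb' with h₁ h₂ h₂
    · exact h₁.1.trans h₂.1.symm
    · cases hb; exact absurd (h₁.2 ▸ hb') (hc a')
    · cases hb'; exact absurd (h₂.2 ▸ hb) (hc a)
    · exact hM.2 a a' b t hb hb'

theorem IsMaximalPLS.exists_mem_row_or_col (hM : IsMaximalPLS M) (h₀ : M r c = none)
    (s : Fin n) : (∃ c', M r c' = some s) ∨ ∃ r', M r' c = some s := by
  by_contra! h
  exact hM.2 r c s h₀ (hM.1.update h.1 h.2)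

theorem IsMaximalPLS.le_rowFreq_add_colFreq (hM : IsMaximalPLS M) (h₀ : M r c = none) :
    n ≤ plsRowFreq M r + plsColFreq M c := by
  classical
  -- the symbols of row `r` and of column `c`; the defaults of `getD` are never read
  have hcover : (univ : Finset (Fin n)) ⊆
      ({c' | (M r c').isSome} : Finset _).image (fun c' => (M r c').getD c') ∪
        ({r' | (M r' c).isSome} : Finset _).image (fun r' => (M r' c).getD r') := by
    intro s _
    rcases hM.exists_mem_row_or_col h₀ s with ⟨c', hc'⟩ | ⟨r', hr'⟩
    · exact mem_union_left _ (mem_image.2 ⟨c', by simp [hc']⟩)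
    · exact mem_union_right _ (mem_image.2 ⟨r', by simp [hr']⟩)
  calc n = #(univ : Finset (Fin n)) := by simp
    _ ≤ _ := card_le_card hcover
    _ ≤ _ := card_union_le _ _
    _ ≤ _ := add_le_add card_image_le card_image_le

theorem card_filter_row_eq_none (M : Fin n → Fin n → Option (Fin n)) (r : Fin n) :
    #{c | M r c = none} = n - plsRowFreq M r := by
  have := card_filter_add_card_filter_not (s := univ) (fun c => (M r c).isSome)
  simp only [card_univ, Fintype.card_fin, Bool.not_eq_true, Option.isSome_eq_false_iff,
    Option.isNone_iff_eq_none] at this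
  unfold plsRowFreq
  omega

theorem card_filter_col_eq_none (M : Fin n → Fin n → Option (Fin n)) (c : Fin n) :
    #{r | M r c = none} = n - plsColFreq M c :=
  card_filter_row_eq_none (fun c r => M r c) c

theorem plsRowFreq_le (M : Fin n → Fin n → Option (Fin n)) (r : Fin n) : plsRowFreq M r ≤ n :=
  (card_filter_le _ _).trans_eq (by simp)

theorem plsSize_eq_sum_plsRowFreq (M : Fin n → Fin n → Option (Fin n)) :
    plsSize M = ∑ r, plsRowFreq M r := by
  simp only [plsSize, plsRowFreq, card_filter, Fintype.sum_prod_type]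

theorem IsMaximalPLS.mul_sub_plsSize_le (hM : IsMaximalPLS M) :
    n * (n ^ 2 - plsSize M) ≤
      ∑ r, plsRowFreq M r * (n - plsRowFreq M r) + ∑ c, plsColFreq M c * (n - plsColFreq M c) := by
  classical
  have hempty : n ^ 2 - plsSize M = ∑ r, (n - plsRowFreq M r) := by
    rw [sum_tsub_distrib _ fun r _ => plsRowFreq_le M r, plsSize_eq_sum_plsRowFreq]
    simp [sq]
  calc n * (n ^ 2 - plsSize M) = ∑ r, ∑ c, if M r c = none then n else 0 := by
        simp [hempty, mul_sum, ← sum_filter, card_filter_row_eq_none, mul_comm]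
    _ ≤ ∑ r, ∑ c, ((if M r c = none then plsRowFreq M r else 0) +
          if M r c = none then plsColFreq M c else 0) := by
        gcongr with r _ c _
        split_ifs with h
        exacts [hM.le_rowFreq_add_colFreq h, le_rfl]
    _ = _ := by
        simp only [sum_add_distrib]
        rw [sum_comm (f := fun r c => if M r c = none then plsColFreq M c else 0)]
        simp [← sum_filter, card_filter_row_eq_none, card_filter_col_eq_none, mul_comm]

theorem IsMaximalPLS.mul_sub_freq_eq_sq_div_four (hM : IsMaximalPLS M)
    (hF : plsSize M = (n ^ 2 + 1) / 2) :
    (∀ r, plsRowFreq M r * (n - plsRowFreq M r) = n ^ 2 / 4) ∧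
      ∀ c, plsColFreq M c * (n - plsColFreq M c) = n ^ 2 / 4 := by
  have hmain := hM.mul_sub_plsSize_le
  rw [hF, Nat.sq_sub_sq_add_one_div_two, mul_add] at hmain
  have hrow := Nat.sum_mul_sub_le (plsRowFreq M) n
  have hcol := Nat.sum_mul_sub_le (plsColFreq M) n
  rw [Fintype.card_fin] at hrow hcol
  exact ⟨Nat.mul_sub_eq_sq_div_four_of_le_sum (by rw [Fintype.card_fin]; omega),
    Nat.mul_sub_eq_sq_div_four_of_le_sum (by rw [Fintype.card_fin]; omega)⟩

theorem IsMaximalPLS.sub_plsSymFreq_le_plsRowFreq (hM : IsMaximalPLS M)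
    (hr : ∀ c, M r c ≠ some s) : n - plsSymFreq M s ≤ plsRowFreq M r := by
  classical
  have hsub : ({c | M r c = none} : Finset (Fin n)) ⊆
      ({rc | M rc.1 rc.2 = some s} : Finset (Fin n × Fin n)).image Prod.snd := by
    intro c hc
    obtain ⟨r', hr'⟩ := (hM.exists_mem_row_or_col (mem_filter.1 hc).2 s).resolve_left
      (not_exists.2 hr)
    exact mem_image.2 ⟨(r', c), by simpa using hr', rfl⟩
  have := (card_le_card hsub).trans card_image_le
  rw [card_filter_row_eq_none] at this
  unfold plsSymFreq
  omega

theorem exists_forall_ne_of_plsSymFreq_lt (h : plsSymFreq M s < n) :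
    ∃ r, ∀ c, M r c ≠ some s := by
  classical
  by_contra! hall
  have hsub : (univ : Finset (Fin n)) ⊆
      ({rc | M rc.1 rc.2 = some s} : Finset (Fin n × Fin n)).image Prod.fst := fun r _ =>
    let ⟨c, hc⟩ := hall r
    mem_image.2 ⟨(r, c), by simpa using hc, rfl⟩
  have := (card_le_card hsub).trans card_image_le
  simp only [card_univ, Fintype.card_fin] at this
  exact absurd h (not_lt.2 this)

theorem exists_plsRowFreq_le_of_plsSize_eq (hn : 1 < n) (hF : plsSize M = (n ^ 2 + 1) / 2) :
    ∃ r, plsRowFreq M r ≤ n / 2 := by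
  obtain ⟨r, -, hr⟩ := exists_lt_of_sum_lt (s := univ) (f := plsRowFreq M)
    (g := fun _ => n / 2 + 1)
    (by simpa [← plsSize_eq_sum_plsRowFreq, hF] using Nat.sq_add_one_div_two_lt hn)
  exact ⟨r, Nat.lt_succ_iff.1 hr⟩

/-- If `M` is a maximal PLS(n), `n > 1`, with exactly `⌈n²/2⌉` filled cells,
then the minimum frequency over rows, columns and entries equals `⌊n/2⌋`. -/
theorem stmt_0 {n : ℕ} (hn : 1 < n) (M : Fin n → Fin n → Option (Fin n))
    (hM : IsMaximalPLS M) (hF : plsSize M = (n ^ 2 + 1) / 2) :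
    (∀ r, n / 2 ≤ plsRowFreq M r) ∧ (∀ c, n / 2 ≤ plsColFreq M c) ∧
    (∀ s, n / 2 ≤ plsSymFreq M s) ∧
    ((∃ r, plsRowFreq M r = n / 2) ∨ (∃ c, plsColFreq M c = n / 2) ∨
      (∃ s, plsSymFreq M s = n / 2)) := by
  obtain ⟨hrow, hcol⟩ := hM.mul_sub_freq_eq_sq_div_four hF
  have hrow_ge r : n / 2 ≤ plsRowFreq M r := Nat.div_two_le_of_sq_div_four_le (hrow r).ge
  have hrow_le r : plsRowFreq M r ≤ n - n / 2 :=
    Nat.le_sub_div_two_of_sq_div_four_le (plsRowFreq_le M r) (hrow r).ge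
  refine ⟨hrow_ge, fun c => Nat.div_two_le_of_sq_div_four_le (hcol c).ge, fun s => ?_, Or.inl ?_⟩
  · by_contra! hs
    obtain ⟨r, hr⟩ := exists_forall_ne_of_plsSymFreq_lt (by omega : plsSymFreq M s < n)
    have := hM.sub_plsSymFreq_le_plsRowFreq hr
    have := hrow_le r
    omega
  · obtain ⟨r, hr⟩ := exists_plsRowFreq_le_of_plsSize_eq hn hF
    exact ⟨r, le_antisymm hr (hrow_ge r)⟩
end

section
/- Suppose M is a maximal partial Latin square of order n > 1 containing exactly ⌈n²/2⌉ filled cells. Then, after suitable permutations of rows and columns, M consists of two Latin squares on disjoint symbol sets placed on the leading diagonal, of orders m and n−m where m = ⌊n/2⌋, and all other cells of M are empty. -/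
open Finset Function

lemma Nat.mul_le_div_two_mul {a b n : ℕ} (h : a + b = n) :
    a * b ≤ n / 2 * (n - n / 2) ∧ (a * b = n / 2 * (n - n / 2) → a = n / 2 ∨ a = n - n / 2) := by
  have hmw : n / 2 + (n - n / 2) = a + b := by omega
  have hwm : n - n / 2 = n / 2 ∨ n - n / 2 = n / 2 + 1 := by omega
  generalize n / 2 = m, n - n / 2 = w at *
  have hmwZ : (m + w : ℤ) = a + b := by exact_mod_cast hmw
  -- `m * w - a * b = (a - m) * (a - w)`, which is `≥ 0` as no integer lies strictly between
  -- `m` and `w`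
  obtain ⟨d, hd, hzero⟩ : ∃ d, a * b + d = m * w ∧ (d = 0 → a = m ∨ a = w) := by
    rcases le_or_gt a m with ha | ha
    · refine ⟨(m - a) * (w - a), ?_, fun hd => ?_⟩
      · zify [ha, show a ≤ w by omega]; linear_combination -(a : ℤ) * hmwZ
      · rcases Nat.mul_eq_zero.1 hd with h' | h' <;> omega
    · refine ⟨(a - m) * (a - w), ?_, fun hd => ?_⟩
      · zify [ha.le, show w ≤ a by omega]; linear_combination -(a : ℤ) * hmwZ
      · rcases Nat.mul_eq_zero.1 hd with h' | h' <;> omega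
  exact ⟨by omega, fun he => hzero (by omega)⟩

lemma Nat.sq_eq_div_two_add (n : ℕ) : n ^ 2 = (n ^ 2 + 1) / 2 + 2 * (n / 2 * (n - n / 2)) := by
  rcases Nat.even_or_odd' n with ⟨k, rfl | rfl⟩
  · rw [show 2 * k / 2 = k by omega, show 2 * k - k = k by omega]; ring_nf; omega
  · rw [show (2 * k + 1) / 2 = k by omega, show 2 * k + 1 - k = k + 1 by omega]; ring_nf; omega

lemma Fin.exists_perm_val_lt_iff {n k : ℕ} {p : Fin n → Prop} [DecidablePred p]
    (h : #{x | p x} = k) : ∃ σ : Equiv.Perm (Fin n), ∀ x : Fin n, (x : ℕ) < k ↔ p (σ x) := by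
  have hcard : Fintype.card {x : Fin n // (x : ℕ) < k} = Fintype.card {x // p x} := by
    rw [Fintype.card_subtype, Fintype.card_subtype, Fin.card_filter_val_lt, h,
      min_eq_right (h ▸ (card_le_univ _).trans_eq (Fintype.card_fin n))]
  have hcard' : Fintype.card {x : Fin n // ¬(x : ℕ) < k} = Fintype.card {x // ¬p x} := by
    rw [Fintype.card_subtype_compl, Fintype.card_subtype_compl, hcard]
  refine ⟨(Fintype.equivOfCardEq hcard).subtypeCongr (Fintype.equivOfCardEq hcard'), fun x => ?_⟩
  by_cases hx : (x : ℕ) < k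
  · simpa [Equiv.subtypeCongr, hx] using ((Fintype.equivOfCardEq hcard) ⟨x, hx⟩).2
  · simpa [Equiv.subtypeCongr, hx] using ((Fintype.equivOfCardEq hcard') ⟨x, hx⟩).2

section Symbols

variable {n : ℕ} {M : Fin n → Fin n → Option (Fin n)}

def rowSymbols (M : Fin n → Fin n → Option (Fin n)) (r : Fin n) : Finset (Fin n) :=
  {s | ∃ c, M r c = some s}

-- Columns are rows of the transpose, so every fact about rows yields its column version.
def colSymbols (M : Fin n → Fin n → Option (Fin n)) (c : Fin n) : Finset (Fin n) :=
  rowSymbols (swap M) c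

lemma mem_rowSymbols {r s : Fin n} : s ∈ rowSymbols M r ↔ ∃ c, M r c = some s := by
  simp [rowSymbols]

lemma mem_colSymbols {c s : Fin n} : s ∈ colSymbols M c ↔ ∃ r, M r c = some s := by
  simp [colSymbols, rowSymbols]

lemma mem_rowSymbols_of_eq_some {r c s : Fin n} (h : M r c = some s) : s ∈ rowSymbols M r :=
  mem_rowSymbols.2 ⟨c, h⟩

lemma mem_colSymbols_of_eq_some {r c s : Fin n} (h : M r c = some s) : s ∈ colSymbols M c :=
  mem_colSymbols.2 ⟨r, h⟩

lemma IsPLS.swap (hM : IsPLS M) : IsPLS (swap M) :=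
  ⟨fun r c c' s h h' => hM.2 c c' r s h h', fun r r' c s h h' => hM.1 c r r' s h h'⟩

lemma IsPLS.card_rowSymbols (hM : IsPLS M) (r : Fin n) :
    #(rowSymbols M r) = #{c | (M r c).isSome} := by
  symm
  refine card_bij (fun c hc => (M r c).get (by simpa using hc)) (fun c _ => ?_) ?_ ?_
  · exact mem_rowSymbols.2 ⟨c, by simp⟩
  · intro c _ c' _ h
    exact hM.1 r c c' _ (Option.eq_some_of_isSome _) (h.symm ▸ Option.eq_some_of_isSome _)
  · intro s hs
    obtain ⟨c, hc⟩ := mem_rowSymbols.1 hs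
    exact ⟨c, by simp [hc], by simp [hc]⟩

lemma IsPLS.card_rowSymbols_add_card_none (hM : IsPLS M) (r : Fin n) :
    #(rowSymbols M r) + #{c | M r c = none} = n := by
  rw [hM.card_rowSymbols]
  simpa using card_filter_add_card_filter_not (s := univ) (fun c => (M r c).isSome)

lemma IsPLS.plsSize_eq_sum (hM : IsPLS M) : plsSize M = ∑ r, #(rowSymbols M r) := by
  simp only [plsSize, card_filter, Fintype.sum_prod_type, hM.card_rowSymbols]

lemma plsSize_add_card_none : plsSize M + #{x : Fin n × Fin n | M x.1 x.2 = none} = n ^ 2 := by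
  simpa [plsSize, sq] using
    card_filter_add_card_filter_not (s := univ) (fun x : Fin n × Fin n => (M x.1 x.2).isSome)

lemma IsMaximalPLS.rowSymbols_union_colSymbols (hM : IsMaximalPLS M) {r c : Fin n}
    (h : M r c = none) : rowSymbols M r ∪ colSymbols M c = univ := by
  refine eq_univ_of_forall fun s => ?_
  by_contra hs
  simp only [mem_union, mem_rowSymbols, mem_colSymbols, not_or, not_exists] at hs
  refine hM.2 r c s h ⟨fun x y y' t h1 h2 => ?_, fun x x' y t h1 h2 => ?_⟩
  · simp only at h1 h2
    split_ifs at h1 h2 <;> grind [hM.1.1]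
  · simp only at h1 h2
    split_ifs at h1 h2 <;> grind [hM.1.2]

end Symbols

section Counting

variable {n : ℕ} {M : Fin n → Fin n → Option (Fin n)}

lemma sum_none_card_add_card :
    ∑ x ∈ {x : Fin n × Fin n | M x.1 x.2 = none}, (#(rowSymbols M x.1) + #(colSymbols M x.2)) =
      ∑ r, #(rowSymbols M r) * #{c | M r c = none} +
        ∑ c, #(colSymbols M c) * #{r | M r c = none} := by
  rw [sum_add_distrib, sum_filter, sum_filter, Fintype.sum_prod_type, Fintype.sum_prod_type_right]
  simp only [← sum_filter, sum_const, smul_eq_mul, mul_comm]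

lemma IsMaximalPLS.card_eq_of_plsSize (hM : IsMaximalPLS M) (hF : plsSize M = (n ^ 2 + 1) / 2) :
    (∀ r c, M r c = none → #(rowSymbols M r) + #(colSymbols M c) = n) ∧
    (∀ r, #(rowSymbols M r) * #{c | M r c = none} = n / 2 * (n - n / 2)) ∧
    (∀ c, #(colSymbols M c) * #{r | M r c = none} = n / 2 * (n - n / 2)) := by
  have hsum := sum_none_card_add_card (M := M)
  set K := n / 2 * (n - n / 2)
  set E : Finset (Fin n × Fin n) := {x | M x.1 x.2 = none}
  have hE : #E = 2 * K := by
    have h : plsSize M + #E = n ^ 2 := plsSize_add_card_none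
    have := Nat.sq_eq_div_two_add n
    omega
  have hcell : ∀ x ∈ E, n ≤ #(rowSymbols M x.1) + #(colSymbols M x.2) := fun x hx => by
    simpa [hM.rowSymbols_union_colSymbols (mem_filter.1 hx).2] using
      card_union_le (rowSymbols M x.1) (colSymbols M x.2)
  have hrow : ∀ r ∈ univ, #(rowSymbols M r) * #{c | M r c = none} ≤ K := fun r _ =>
    (Nat.mul_le_div_two_mul (hM.1.card_rowSymbols_add_card_none r)).1
  have hcol : ∀ c ∈ univ, #(colSymbols M c) * #{r | M r c = none} ≤ K := fun c _ =>
    (Nat.mul_le_div_two_mul (hM.1.swap.card_rowSymbols_add_card_none c)).1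
  have hlow := sum_le_sum hcell
  have hR := sum_le_sum hrow
  have hC := sum_le_sum hcol
  simp only [sum_const, card_univ, Fintype.card_fin, smul_eq_mul, hE] at hlow hR hC
  -- `n · #E ≤ ∑_E (f + g) = ∑ f (n - f) + ∑ g (n - g) ≤ 2 n K = n · #E`: every bound is tight
  refine ⟨fun r c h => ?_, fun r => ?_, fun c => ?_⟩
  · refine ((sum_eq_sum_iff_of_le hcell).1 ?_ (r, c) (by simpa [E] using h)).symm
    rw [sum_const, smul_eq_mul, hE]
    linarith
  · refine (sum_eq_sum_iff_of_le hrow).1 ?_ r (mem_univ r)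
    rw [sum_const, card_univ, Fintype.card_fin, smul_eq_mul]
    linarith
  · refine (sum_eq_sum_iff_of_le hcol).1 ?_ c (mem_univ c)
    rw [sum_const, card_univ, Fintype.card_fin, smul_eq_mul]
    linarith

lemma IsMaximalPLS.colSymbols_eq_compl (hM : IsMaximalPLS M) (hF : plsSize M = (n ^ 2 + 1) / 2)
    {r c : Fin n} (h : M r c = none) : colSymbols M c = (rowSymbols M r)ᶜ := by
  refine (eq_of_subset_of_card_le (fun s hs => ?_) ?_).symm
  · simpa [mem_compl.1 hs] using (hM.rowSymbols_union_colSymbols h).ge (mem_univ s)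
  · have := (hM.card_eq_of_plsSize hF).1 r c h
    rw [card_compl, Fintype.card_fin]
    omega

lemma IsPLS.exists_card_rowSymbols_eq (hn : 1 < n) (hM : IsPLS M)
    (hF : plsSize M = (n ^ 2 + 1) / 2)
    (hcard : ∀ r, #(rowSymbols M r) = n / 2 ∨ #(rowSymbols M r) = n - n / 2) :
    ∃ r, #(rowSymbols M r) = n / 2 := by
  by_contra! h
  have hw : ∀ r, #(rowSymbols M r) = n - n / 2 := fun r => (hcard r).resolve_left (h r)
  have hodd : n / 2 ≠ n - n / 2 := hw ⟨0, by omega⟩ ▸ h ⟨0, by omega⟩ |>.symm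
  rw [hM.plsSize_eq_sum, Fintype.sum_congr _ _ hw, sum_const, card_univ, Fintype.card_fin,
    smul_eq_mul] at hF
  rcases Nat.even_or_odd' n with ⟨k, rfl | rfl⟩
  · omega
  · rw [show (2 * k + 1) / 2 = k by omega, show 2 * k + 1 - k = k + 1 by omega] at hF
    ring_nf at hF
    omega

lemma rowSymbols_eq_compl_of_ne (hM : IsPLS M)
    (hnone : ∀ r c, M r c = none → colSymbols M c = (rowSymbols M r)ᶜ) {r r₀ : Fin n}
    (hcard : #(rowSymbols M r) + #(rowSymbols M r₀) ≤ n) (hne : rowSymbols M r ≠ rowSymbols M r₀) :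
    rowSymbols M r = (rowSymbols M r₀)ᶜ := by
  have h₀ := hM.card_rowSymbols_add_card_none r₀
  have hr := hM.card_rowSymbols r
  set empty₀ : Finset (Fin n) := {c | M r₀ c = none}
  set filled : Finset (Fin n) := {c | (M r c).isSome}
  have hsub : empty₀ ⊆ filled := fun c hc => by
    simp only [empty₀, filled, mem_filter, mem_univ, true_and, Option.isSome_iff_ne_none] at hc ⊢
    exact fun h => hne (compl_injective ((hnone r c h).symm.trans (hnone r₀ c hc)))
  have hfill := eq_of_subset_of_card_le hsub (by omega)
  refine eq_of_subset_of_card_le (fun s hs => ?_) ?_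
  · obtain ⟨c, hc⟩ := mem_rowSymbols.1 hs
    have : c ∈ empty₀ := hfill ▸ by simp [filled, hc]
    exact hnone r₀ c (mem_filter.1 this).2 ▸ mem_colSymbols_of_eq_some hc
  · rw [card_compl, Fintype.card_fin, hr, ← hfill]
    omega

end Counting

section TwoBlock

variable {n : ℕ} {M : Fin n → Fin n → Option (Fin n)} {A : Finset (Fin n)}

-- The shape of the conclusion, before rows and columns are reordered.
structure IsTwoBlock (M : Fin n → Fin n → Option (Fin n)) (A : Finset (Fin n)) : Prop where
  rowSymbols_eq_or : ∀ r, rowSymbols M r = A ∨ rowSymbols M r = Aᶜ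
  colSymbols_eq_or : ∀ c, colSymbols M c = A ∨ colSymbols M c = Aᶜ
  isSome_iff : ∀ r c, (M r c).isSome ↔ rowSymbols M r = colSymbols M c

lemma IsTwoBlock.of_colSymbols_eq_compl
    (hnone : ∀ r c, M r c = none → colSymbols M c = (rowSymbols M r)ᶜ)
    (hrow : ∀ r, rowSymbols M r = A ∨ rowSymbols M r = Aᶜ)
    (hcol : ∀ c, colSymbols M c = A ∨ colSymbols M c = Aᶜ) : IsTwoBlock M A := by
  refine ⟨hrow, hcol, fun r c => ⟨fun h => ?_, fun h => ?_⟩⟩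
  · obtain ⟨s, hs⟩ := Option.isSome_iff_exists.1 h
    have := mem_rowSymbols_of_eq_some hs
    have := mem_colSymbols_of_eq_some hs
    rcases hrow r with hr | hr <;> rcases hcol c with hc | hc <;> simp_all
  · have : Nonempty (Fin n) := ⟨r⟩
    by_contra hnot
    exact ne_compl_self (h.trans (hnone r c (Option.not_isSome_iff_eq_none.1 hnot)))

lemma IsTwoBlock.swap (h : IsTwoBlock M A) : IsTwoBlock (swap M) A :=
  ⟨h.colSymbols_eq_or, h.rowSymbols_eq_or, fun r c => (h.isSome_iff c r).trans eq_comm⟩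

lemma rowSymbols_comp (σ : Fin n → Fin n) {τ : Fin n → Fin n} (hτ : Surjective τ) (r : Fin n) :
    rowSymbols (fun r c => M (σ r) (τ c)) r = rowSymbols M (σ r) := by
  ext s
  simp only [mem_rowSymbols, hτ.exists (p := fun c => M (σ r) c = some s)]

lemma colSymbols_comp {σ : Fin n → Fin n} (hσ : Surjective σ) (τ : Fin n → Fin n) (c : Fin n) :
    colSymbols (fun r c => M (σ r) (τ c)) c = colSymbols M (τ c) :=
  rowSymbols_comp (M := Function.swap M) τ hσ c

lemma IsTwoBlock.comp (h : IsTwoBlock M A) {σ τ : Fin n → Fin n} (hσ : Surjective σ)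
    (hτ : Surjective τ) : IsTwoBlock (fun r c => M (σ r) (τ c)) A := by
  refine ⟨fun r => ?_, fun c => ?_, fun r c => ?_⟩
  · rw [rowSymbols_comp σ hτ]; exact h.rowSymbols_eq_or (σ r)
  · rw [colSymbols_comp hσ τ]; exact h.colSymbols_eq_or (τ c)
  rw [rowSymbols_comp σ hτ, colSymbols_comp hσ τ]
  exact h.isSome_iff (σ r) (τ c)

lemma IsTwoBlock.rowSymbols_eq_compl_iff (h : IsTwoBlock M A) (r : Fin n) :
    rowSymbols M r = Aᶜ ↔ rowSymbols M r ≠ A := by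
  have : Nonempty (Fin n) := ⟨r⟩
  rcases h.rowSymbols_eq_or r with hr | hr <;> simp [hr, ne_compl_self, compl_ne_self]

lemma IsTwoBlock.isSome_iff_or (h : IsTwoBlock M A) (r c : Fin n) :
    (M r c).isSome ↔ (rowSymbols M r = A ∧ colSymbols M c = A) ∨
      (rowSymbols M r ≠ A ∧ colSymbols M c ≠ A) := by
  have : Nonempty (Fin n) := ⟨r⟩
  rw [h.isSome_iff]
  rcases h.rowSymbols_eq_or r with hr | hr <;> rcases h.colSymbols_eq_or c with hc | hc <;>
    simp [hr, hc, ne_compl_self, compl_ne_self]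

lemma IsTwoBlock.exists_eq_some_of_mem_rowSymbols (h : IsTwoBlock M A) {r s : Fin n}
    (hs : s ∈ rowSymbols M r) : ∃ c, colSymbols M c = rowSymbols M r ∧ M r c = some s := by
  obtain ⟨c, hc⟩ := mem_rowSymbols.1 hs
  exact ⟨c, ((h.isSome_iff r c).1 (by simp [hc])).symm, hc⟩

lemma IsTwoBlock.latin_on_block (h : IsTwoBlock M A) {S : Finset (Fin n)} {p q : Fin n → Prop}
    (hp : ∀ r, rowSymbols M r = S ↔ p r) (hq : ∀ c, colSymbols M c = S ↔ q c) :
    (∀ r c, p r → q c → ∀ s, M r c = some s → s ∈ S) ∧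
    (∀ r, p r → ∀ s ∈ S, ∃ c, q c ∧ M r c = some s) ∧
    (∀ c, q c → ∀ s ∈ S, ∃ r, p r ∧ M r c = some s) := by
  refine ⟨fun r c hr _ s hs => (hp r).2 hr ▸ mem_rowSymbols_of_eq_some hs, fun r hr s hs => ?_,
    fun c hc s hs => ?_⟩
  · obtain ⟨c, hc, hs⟩ := h.exists_eq_some_of_mem_rowSymbols (((hp r).2 hr).symm ▸ hs)
    exact ⟨c, (hq c).1 (hc.trans ((hp r).2 hr)), hs⟩
  · obtain ⟨r, hr, hs⟩ := h.swap.exists_eq_some_of_mem_rowSymbols (((hq c).2 hc).symm ▸ hs)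
    exact ⟨r, (hp r).1 (hr.trans ((hq c).2 hc)), hs⟩

lemma IsTwoBlock.card_filter_colSymbols_eq (hM : IsPLS M) (h : IsTwoBlock M A) (r : Fin n) :
    #{c | colSymbols M c = rowSymbols M r} = #(rowSymbols M r) := by
  simp only [hM.card_rowSymbols, h.isSome_iff, eq_comm]

lemma IsTwoBlock.card_filter_rowSymbols_eq (hM : IsPLS M) (h : IsTwoBlock M A) {r₀ : Fin n}
    (hne : (rowSymbols M r₀).Nonempty) :
    #{r | rowSymbols M r = rowSymbols M r₀} = #(rowSymbols M r₀) := by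
  obtain ⟨s, hs⟩ := hne
  obtain ⟨c₀, hc₀, -⟩ := h.exists_eq_some_of_mem_rowSymbols hs
  rw [← hc₀]
  exact h.swap.card_filter_colSymbols_eq hM.swap c₀

end TwoBlock

theorem IsMaximalPLS.exists_isTwoBlock {n : ℕ} {M : Fin n → Fin n → Option (Fin n)} (hn : 1 < n)
    (hM : IsMaximalPLS M) (hF : plsSize M = (n ^ 2 + 1) / 2) :
    ∃ r₀, #(rowSymbols M r₀) = n / 2 ∧ IsTwoBlock M (rowSymbols M r₀) := by
  obtain ⟨-, hrow, hcol⟩ := hM.card_eq_of_plsSize hF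
  have hnone : ∀ r c, M r c = none → colSymbols M c = (rowSymbols M r)ᶜ :=
    fun r c => hM.colSymbols_eq_compl hF
  have hcard : ∀ r, #(rowSymbols M r) = n / 2 ∨ #(rowSymbols M r) = n - n / 2 := fun r =>
    (Nat.mul_le_div_two_mul (hM.1.card_rowSymbols_add_card_none r)).2 (hrow r)
  obtain ⟨r₀, hr₀⟩ := hM.1.exists_card_rowSymbols_eq hn hF hcard
  have hrow' : ∀ r, rowSymbols M r = rowSymbols M r₀ ∨ rowSymbols M r = (rowSymbols M r₀)ᶜ :=
    fun r => or_iff_not_imp_left.2 <|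
      rowSymbols_eq_compl_of_ne hM.1 hnone (by rcases hcard r with h | h <;> omega)
  refine ⟨r₀, hr₀, .of_colSymbols_eq_compl hnone hrow' fun c => ?_⟩
  obtain ⟨r, hr⟩ : ∃ r, M r c = none := by
    have hpos : 0 < n / 2 * (n - n / 2) := Nat.mul_pos (by omega) (by omega)
    rw [← hcol c] at hpos
    simpa [Finset.Nonempty] using Nat.pos_of_mul_pos_left hpos
  rcases hrow' r with h | h <;> simp [hnone r c hr, h]

/-- A maximal PLS(n), n > 1, with ⌈n²/2⌉ filled cells is, up to row and column
permutations, two Latin squares on disjoint symbol sets on the leading diagonal,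
of orders m = ⌊n/2⌋ and n - m, all other cells being empty. -/
theorem stmt_2 {n : ℕ} (hn : 1 < n) (M : Fin n → Fin n → Option (Fin n))
    (hM : IsMaximalPLS M) (hF : plsSize M = (n ^ 2 + 1) / 2) :
    ∃ (σ τ : Equiv.Perm (Fin n)) (S₁ S₂ : Finset (Fin n)),
      Disjoint S₁ S₂ ∧ S₁.card = n / 2 ∧ S₂.card = n - n / 2 ∧
      (∀ r c : Fin n, (M (σ r) (τ c)).isSome ↔
        (((r : ℕ) < n / 2 ∧ (c : ℕ) < n / 2) ∨ (n / 2 ≤ (r : ℕ) ∧ n / 2 ≤ (c : ℕ)))) ∧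
      (∀ r c : Fin n, (r : ℕ) < n / 2 → (c : ℕ) < n / 2 →
        ∀ s, M (σ r) (τ c) = some s → s ∈ S₁) ∧
      (∀ r : Fin n, (r : ℕ) < n / 2 → ∀ s ∈ S₁,
        ∃ c : Fin n, (c : ℕ) < n / 2 ∧ M (σ r) (τ c) = some s) ∧
      (∀ c : Fin n, (c : ℕ) < n / 2 → ∀ s ∈ S₁,
        ∃ r : Fin n, (r : ℕ) < n / 2 ∧ M (σ r) (τ c) = some s) ∧
      (∀ r c : Fin n, n / 2 ≤ (r : ℕ) → n / 2 ≤ (c : ℕ) →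
        ∀ s, M (σ r) (τ c) = some s → s ∈ S₂) ∧
      (∀ r : Fin n, n / 2 ≤ (r : ℕ) → ∀ s ∈ S₂,
        ∃ c : Fin n, n / 2 ≤ (c : ℕ) ∧ M (σ r) (τ c) = some s) ∧
      (∀ c : Fin n, n / 2 ≤ (c : ℕ) → ∀ s ∈ S₂,
        ∃ r : Fin n, n / 2 ≤ (r : ℕ) ∧ M (σ r) (τ c) = some s) := by
  obtain ⟨r₀, hA, hT⟩ := hM.exists_isTwoBlock hn hF
  have hRA := hT.card_filter_rowSymbols_eq hM.1 (r₀ := r₀) (card_pos.1 (by omega))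
  have hCA := hT.card_filter_colSymbols_eq hM.1 r₀
  set A := rowSymbols M r₀
  obtain ⟨σ, hσ⟩ := Fin.exists_perm_val_lt_iff (hRA.trans hA)
  obtain ⟨τ, hτ⟩ := Fin.exists_perm_val_lt_iff (hCA.trans hA)
  have hN := hT.comp σ.surjective τ.surjective
  have hlowR : ∀ r, rowSymbols (fun r c => M (σ r) (τ c)) r = A ↔ (r : ℕ) < n / 2 := fun r => by
    rw [rowSymbols_comp σ τ.surjective, hσ]
  have hlowC : ∀ c, colSymbols (fun r c => M (σ r) (τ c)) c = A ↔ (c : ℕ) < n / 2 := fun c => by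
    rw [colSymbols_comp σ.surjective τ, hτ]
  have hhighR : ∀ r, rowSymbols (fun r c => M (σ r) (τ c)) r = Aᶜ ↔ n / 2 ≤ (r : ℕ) := fun r =>
    ((hN.rowSymbols_eq_compl_iff r).trans (not_congr (hlowR r))).trans not_lt
  have hhighC : ∀ c, colSymbols (fun r c => M (σ r) (τ c)) c = Aᶜ ↔ n / 2 ≤ (c : ℕ) := fun c =>
    ((hN.swap.rowSymbols_eq_compl_iff c).trans (not_congr (hlowC c))).trans not_lt
  obtain ⟨h₁, h₂, h₃⟩ := hN.latin_on_block hlowR hlowC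
  obtain ⟨h₄, h₅, h₆⟩ := hN.latin_on_block hhighR hhighC
  refine ⟨σ, τ, A, Aᶜ, disjoint_compl_right, hA, by rw [card_compl, Fintype.card_fin, hA],
    fun r c => (hN.isSome_iff_or r c).trans ?_, h₁, h₂, h₃, h₄, h₅, h₆⟩
  simp only [Ne, hlowR, hlowC, not_lt]
end

section
/- Let D be a d×d array in which each cell is either filled or empty, and let T be a maximum partial transversal of empty cells of D of size t (no two cells of T share a row or column, and no larger such set of empty cells exists). If T occupies cells (1,1),…,(t,t), then every cell (i,j) with t+1 ≤ i,j ≤ d is filled, and moreover the number of filled cells in row i plus the number of filled cells in column j is at least 2d − t, for all t+1 ≤ i,j ≤ d. -/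
def rowCount {d : ℕ} (D : Fin d → Fin d → Bool) (i : Fin d) : ℕ :=
  (Finset.univ.filter (fun j : Fin d => D i j = true)).card

def colCount {d : ℕ} (D : Fin d → Fin d → Bool) (j : Fin d) : ℕ :=
  (Finset.univ.filter (fun i : Fin d => D i j = true)).card

/-- If the empty cells (1,1),…,(t,t) form a maximum partial transversal of empty
cells of a d×d array, then every cell (i,j) with t+1 ≤ i,j ≤ d is filled and
f_r(i) + f_c(j) ≥ 2d − t. -/
theorem stmt_3 {d : ℕ} (D : Fin d → Fin d → Bool) (t : ℕ) (ht : t ≤ d)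
    (hT : ∀ i : Fin d, (i : ℕ) < t → D i i = false)
    (hmax : ∀ T' : Finset (Fin d × Fin d),
      (∀ p ∈ T', D p.1 p.2 = false) →
      (∀ p ∈ T', ∀ q ∈ T', p ≠ q → p.1 ≠ q.1 ∧ p.2 ≠ q.2) →
      T'.card ≤ t) :
    ∀ i j : Fin d, t ≤ (i : ℕ) → t ≤ (j : ℕ) →
      D i j = true ∧ 2 * d - t ≤ rowCount D i + colCount D j := by
  classical
  have hfiltcard : (Finset.univ.filter (fun k : Fin d => (k:ℕ) < t)).card = t := by
    have : (Finset.univ.filter (fun k : Fin d => (k:ℕ) < t)) =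
        (Finset.range t).attachFin (fun m hm => lt_of_lt_of_le (Finset.mem_range.mp hm) ht) := by
      ext k; simp
    rw [this, Finset.card_attachFin, Finset.card_range]
  set S : Finset (Fin d × Fin d) :=
    Finset.univ.filter (fun p : Fin d × Fin d => p.1 = p.2 ∧ (p.1 : ℕ) < t) with hS
  have hmemS : ∀ p : Fin d × Fin d, p ∈ S ↔ p.1 = p.2 ∧ (p.1 : ℕ) < t := by
    intro p; simp [hS]
  have hScard : S.card = t := by
    have : S = (Finset.univ.filter (fun k : Fin d => (k:ℕ) < t)).image (fun k => (k, k)) := by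
      ext ⟨a, b⟩
      simp only [hmemS, Finset.mem_image, Finset.mem_filter, Finset.mem_univ, true_and,
        Prod.mk.injEq]
      constructor
      · rintro ⟨rfl, h⟩; exact ⟨a, h, rfl, rfl⟩
      · rintro ⟨k, hk, rfl, rfl⟩; exact ⟨rfl, hk⟩
    rw [this, Finset.card_image_of_injective _ (fun a b h => (Prod.mk.injEq _ _ _ _ ▸ h).1),
      hfiltcard]
  -- first part: filled
  have hfill : ∀ i j : Fin d, t ≤ (i:ℕ) → t ≤ (j:ℕ) → D i j = true := by
    intro i j hi hj
    by_contra h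
    have h' : D i j = false := by simpa using h
    have hnot : (i, j) ∉ S := by
      simp only [hmemS, Fin.ext_iff, not_and]
      omega
    have := hmax (insert (i, j) S) ?_ ?_
    · rw [Finset.card_insert_of_notMem hnot, hScard] at this; omega
    · intro p hp
      obtain ⟨a, b⟩ := p
      simp only [Finset.mem_insert, hmemS, Prod.mk.injEq] at hp
      rcases hp with ⟨rfl, rfl⟩ | ⟨rfl, hlt⟩
      · exact h'
      · exact hT a hlt
    · intro p hp q hq hpq
      obtain ⟨a, b⟩ := p
      obtain ⟨c, e⟩ := q
      simp only [Finset.mem_insert, hmemS, Prod.mk.injEq, ne_eq, Fin.ext_iff,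
        not_and] at hp hq hpq ⊢
      omega
  intro i j hi hj
  refine ⟨hfill i j hi hj, ?_⟩
  -- for each k < t, D i k = true ∨ D k j = true
  have hswap : ∀ k : Fin d, (k:ℕ) < t → D i k = true ∨ D k j = true := by
    intro k hk
    by_contra hc
    push_neg at hc
    obtain ⟨h1, h2⟩ := hc
    have h1' : D i k = false := by simpa using h1
    have h2' : D k j = false := by simpa using h2
    set T'' : Finset (Fin d × Fin d) := insert (i, k) (insert (k, j) (S.erase (k, k))) with hT''
    have hkj_notS : (k, j) ∉ S.erase (k, k) := by
      simp only [Finset.mem_erase, hmemS, Prod.mk.injEq, ne_eq, Fin.ext_iff, not_and]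
      omega
    have hik_not : (i, k) ∉ insert (k, j) (S.erase (k, k)) := by
      simp only [Finset.mem_insert, Finset.mem_erase, hmemS, Prod.mk.injEq, ne_eq, Fin.ext_iff,
        not_and, not_or]
      omega
    have hkkS : (k, k) ∈ S := (hmemS _).mpr ⟨rfl, hk⟩
    have hcard : T''.card = t + 1 := by
      rw [hT'', Finset.card_insert_of_notMem hik_not,
        Finset.card_insert_of_notMem hkj_notS, Finset.card_erase_of_mem hkkS, hScard]
      omega
    have hle := hmax T'' ?_ ?_
    · omega
    · intro p hp
      obtain ⟨a, b⟩ := p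
      simp only [hT'', Finset.mem_insert, Finset.mem_erase, hmemS, Prod.mk.injEq] at hp
      rcases hp with ⟨rfl, rfl⟩ | ⟨rfl, rfl⟩ | ⟨-, rfl, hlt⟩
      · exact h1'
      · exact h2'
      · exact hT a hlt
    · intro p hp q hq hpq
      obtain ⟨a, b⟩ := p
      obtain ⟨c, e⟩ := q
      simp only [hT'', Finset.mem_insert, Finset.mem_erase, hmemS, Prod.mk.injEq, ne_eq,
        Fin.ext_iff, not_and] at hp hq hpq ⊢
      omega
  -- counting
  have hrow : (Finset.univ.filter (fun k : Fin d => ¬ (k:ℕ) < t)).card +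
      (Finset.univ.filter (fun k : Fin d => (k:ℕ) < t ∧ D i k = true)).card ≤ rowCount D i := by
    rw [rowCount, ← Finset.card_union_of_disjoint]
    · apply Finset.card_le_card
      intro k hk
      simp only [Finset.mem_union, Finset.mem_filter, Finset.mem_univ, true_and] at hk ⊢
      rcases hk with hk | hk
      · exact hfill i k hi (by omega)
      · exact hk.2
    · rw [Finset.disjoint_left]
      intro k hk1 hk2
      simp only [Finset.mem_filter, Finset.mem_univ, true_and] at hk1 hk2
      exact hk1 hk2.1
  have hcol : (Finset.univ.filter (fun k : Fin d => ¬ (k:ℕ) < t)).card +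
      (Finset.univ.filter (fun k : Fin d => (k:ℕ) < t ∧ D k j = true)).card ≤ colCount D j := by
    rw [colCount, ← Finset.card_union_of_disjoint]
    · apply Finset.card_le_card
      intro k hk
      simp only [Finset.mem_union, Finset.mem_filter, Finset.mem_univ, true_and] at hk ⊢
      rcases hk with hk | hk
      · exact hfill k j (by omega) hj
      · exact hk.2
    · rw [Finset.disjoint_left]
      intro k hk1 hk2
      simp only [Finset.mem_filter, Finset.mem_univ, true_and] at hk1 hk2
      exact hk1 hk2.1
  have hnotcard : (Finset.univ.filter (fun k : Fin d => ¬ (k:ℕ) < t)).card = d - t := by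
    have := Finset.card_filter_add_card_filter_not
      (s := (Finset.univ : Finset (Fin d))) (p := fun k : Fin d => (k:ℕ) < t)
    simp only [Finset.card_univ, Fintype.card_fin] at this
    omega
  have hsum : t ≤ (Finset.univ.filter (fun k : Fin d => (k:ℕ) < t ∧ D i k = true)).card +
      (Finset.univ.filter (fun k : Fin d => (k:ℕ) < t ∧ D k j = true)).card := by
    calc t = (Finset.univ.filter (fun k : Fin d => (k:ℕ) < t)).card := hfiltcard.symm
      _ ≤ ((Finset.univ.filter (fun k : Fin d => (k:ℕ) < t ∧ D i k = true)) ∪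
          (Finset.univ.filter (fun k : Fin d => (k:ℕ) < t ∧ D k j = true))).card := by
        apply Finset.card_le_card
        intro k hk
        simp only [Finset.mem_filter, Finset.mem_univ, true_and, Finset.mem_union] at hk ⊢
        rcases hswap k hk with h | h
        · exact Or.inl ⟨hk, h⟩
        · exact Or.inr ⟨hk, h⟩
      _ ≤ _ := Finset.card_union_le _ _
  omega
end

section
/- Let n, m, t, F be integers with 2F ≥ 2m² + t(n−m) + (n−m−t)(2(n−m)−t). Then F ≥ ⌈(n−m−t)²/2 + (n−3m)²/6 + n²/3⌉; in particular F ≥ n²/3, with 3F = n² only possible when t = n−m and 3m = n. -/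
theorem stmt_6 (n m t F : ℤ)
    (h : 2 * F ≥ 2 * m ^ 2 + t * (n - m) + (n - m - t) * (2 * (n - m) - t)) :
    F ≥ ⌈((n - m - t : ℚ) ^ 2 / 2 + ((n : ℚ) - 3 * m) ^ 2 / 6 + (n : ℚ) ^ 2 / 3)⌉ ∧
    (F : ℚ) ≥ (n : ℚ) ^ 2 / 3 ∧
    (3 * F = n ^ 2 → t = n - m ∧ 3 * m = n) := by
  have key : 6 * F ≥ 3 * (n - m - t) ^ 2 + (n - 3 * m) ^ 2 + 2 * n ^ 2 := by nlinarith [h]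
  have keyQ : (6 : ℚ) * F ≥ 3 * ((n : ℚ) - m - t) ^ 2 + ((n : ℚ) - 3 * m) ^ 2 + 2 * (n : ℚ) ^ 2 := by
    exact_mod_cast key
  have hQ : (F : ℚ) ≥ ((n : ℚ) - m - t) ^ 2 / 2 + ((n : ℚ) - 3 * m) ^ 2 / 6 + (n : ℚ) ^ 2 / 3 := by
    linarith
  refine ⟨Int.ceil_le.mpr (by linarith), ?_, ?_⟩
  · nlinarith [sq_nonneg ((n : ℚ) - m - t), sq_nonneg ((n : ℚ) - 3 * m)]
  · intro h3
    constructor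
    · nlinarith [sq_nonneg (n - m - t), sq_nonneg (n - 3 * m)]
    · nlinarith [sq_nonneg (n - m - t), sq_nonneg (n - 3 * m)]
end

section
/- If M is a maximal orthogonal partial Latin square of order n with exactly n²/3 filled cells, then every row, every column, every first-entry symbol and every second-entry symbol has frequency exactly n/3 (in particular 3 divides n). Conversely if every row has frequency n/3 then M has n²/3 filled cells. -/
/-- An orthogonal partial Latin square of order `n` (superimposed form):
each first-entry symbol appears at most once per row and per column, each
second-entry symbol appears at most once per row and per column, and each
ordered pair of symbols occurs in at most one cell. -/
def IsOPLS {n : ℕ} (M : Fin n → Fin n → Option (Fin n × Fin n)) : Prop :=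
  (∀ r c c' p q, M r c = some p → M r c' = some q → p.1 = q.1 → c = c') ∧
  (∀ r r' c p q, M r c = some p → M r' c = some q → p.1 = q.1 → r = r') ∧
  (∀ r c c' p q, M r c = some p → M r c' = some q → p.2 = q.2 → c = c') ∧
  (∀ r r' c p q, M r c = some p → M r' c = some q → p.2 = q.2 → r = r') ∧
  (∀ r c r' c' p, M r c = some p → M r' c' = some p → r = r' ∧ c = c')

/-- A maximal OPLS: no entry pair can be inserted into any empty cell. -/
def IsMaximalOPLS {n : ℕ} (M : Fin n → Fin n → Option (Fin n × Fin n)) : Prop :=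
  IsOPLS M ∧ ∀ r c (p : Fin n × Fin n), M r c = none →
    ¬ IsOPLS (fun r' c' => if r' = r ∧ c' = c then some p else M r' c')

/-- Number of filled cells. -/
def oplsSize {n : ℕ} (M : Fin n → Fin n → Option (Fin n × Fin n)) : ℕ :=
  (Finset.univ.filter (fun rc : Fin n × Fin n => (M rc.1 rc.2).isSome)).card

def oplsRowFreq {n : ℕ} (M : Fin n → Fin n → Option (Fin n × Fin n)) (r : Fin n) : ℕ :=
  (Finset.univ.filter (fun c : Fin n => (M r c).isSome)).card

def oplsColFreq {n : ℕ} (M : Fin n → Fin n → Option (Fin n × Fin n)) (c : Fin n) : ℕ :=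
  (Finset.univ.filter (fun r : Fin n => (M r c).isSome)).card

def oplsFstFreq {n : ℕ} (M : Fin n → Fin n → Option (Fin n × Fin n)) (s : Fin n) : ℕ :=
  (Finset.univ.filter (fun rc : Fin n × Fin n => (M rc.1 rc.2).map Prod.fst = some s)).card

def oplsSndFreq {n : ℕ} (M : Fin n → Fin n → Option (Fin n × Fin n)) (s : Fin n) : ℕ :=
  (Finset.univ.filter (fun rc : Fin n × Fin n => (M rc.1 rc.2).map Prod.snd = some s)).card

/-!
Record a filled cell as the word (row, column, first entry, second entry) of length 4. The OPLS
conditions say that any two coordinates determine the word, and maximality says that every word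
agrees with a filled one in two coordinates. Let `μ` be the least of the `4n` frequencies; after
permuting coordinates it is the frequency of a row `r`, and `m = n - μ` columns, first and second
symbols are absent from `r`. For absent symbols `a`, `b` that never occur together, the word
`(r, c, a, b)` with `c` an absent column can only be covered through column `c`, so
`freq a + freq b ≥ m`. A counting lemma on the pairs that do occur gives
`m² ≤ ∑ freq a + ∑ freq b` over the absent symbols, which is at most `2 (N - μ²)` for `N` filled
cells. With `3N = n²` this reads `(m - 2μ)² ≤ 0`, so `n = 3μ`; then the frequencies of each kind
are all at least `μ` and add up to `N = nμ`, hence all equal `μ`.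
-/

open Finset

section Bipartite

variable {α β : Type*}

lemma mul_add_mul_le_sum_add_mul [DecidableEq α] {Y N : Finset α} (hN : N ⊆ Y) (p : α → ℕ)
    {s t m : ℕ} (hs : ∀ a ∈ Y, s ≤ p a) (hcov : ∀ a ∈ Y \ N, m ≤ p a + t) :
    #N * s + #(Y \ N) * m ≤ ∑ a ∈ Y, p a + #(Y \ N) * t := by
  have hN_sum : #N * s ≤ ∑ a ∈ N, p a := by
    simpa using card_nsmul_le_sum N p s fun a ha => hs a (hN ha)
  have hsdiff_sum : #(Y \ N) * m ≤ ∑ a ∈ Y \ N, (p a + t) := by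
    simpa using card_nsmul_le_sum (Y \ N) _ m hcov
  rw [sum_add_distrib, sum_const, smul_eq_mul] at hsdiff_sum
  rw [← sum_sdiff hN]
  omega

theorem sq_le_sum_add_sum_of_not_rel {Y : Finset α} {Z : Finset β} {m : ℕ}
    (hY : #Y = m) (hZ : #Z = m) (p : α → ℕ) (q : β → ℕ) (E : α → β → Prop)
    (hcov : ∀ a ∈ Y, ∀ b ∈ Z, ¬ E a b → m ≤ p a + q b)
    (hp : ∀ a ∈ Y, ∀ T ⊆ Z, (∀ b ∈ T, E a b) → #T ≤ p a)
    (hq : ∀ b ∈ Z, ∀ T ⊆ Y, (∀ a ∈ T, E a b) → #T ≤ q b) :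
    m ^ 2 ≤ ∑ a ∈ Y, p a + ∑ b ∈ Z, q b := by
  classical
  rcases Y.eq_empty_or_nonempty with rfl | hYne
  · simp [← hY]
  have hZne : Z.Nonempty := card_pos.mp (hZ ▸ hY ▸ card_pos.mpr hYne)
  obtain ⟨a₀, ha₀, hp_min⟩ := exists_min_image Y p hYne
  obtain ⟨b₀, hb₀, hq_min⟩ := exists_min_image Z q hZne
  by_cases hst : m ≤ p a₀ + q b₀
  · have hP := card_nsmul_le_sum Y p _ hp_min
    have hQ := card_nsmul_le_sum Z q _ hq_min
    rw [hY, smul_eq_mul] at hP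
    rw [hZ, smul_eq_mul] at hQ
    nlinarith
  -- With `δ, δ'` the degrees of `b₀, a₀`, the excess is at least `(m - p a₀ - q b₀) (m - δ - δ')`.
  have hP := mul_add_mul_le_sum_add_mul (filter_subset (E · b₀) Y) p hp_min (t := q b₀) (m := m)
    fun a ha => by
      rw [mem_sdiff, mem_filter] at ha
      exact hcov a ha.1 b₀ hb₀ fun h => ha.2 ⟨ha.1, h⟩
  have hQ := mul_add_mul_le_sum_add_mul (filter_subset (E a₀ ·) Z) q hq_min (t := p a₀) (m := m)
    fun b hb => by
      rw [mem_sdiff, mem_filter] at hb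
      have := hcov a₀ ha₀ b hb.1 fun h => hb.2 ⟨hb.1, h⟩
      omega
  have hδ : #{a ∈ Y | E a b₀} ≤ q b₀ :=
    hq b₀ hb₀ _ (filter_subset _ _) fun a ha => (mem_filter.1 ha).2
  have hδ' : #{b ∈ Z | E a₀ b} ≤ p a₀ :=
    hp a₀ ha₀ _ (filter_subset _ _) fun b hb => (mem_filter.1 hb).2
  have hk := card_sdiff_add_card_eq_card (filter_subset (E · b₀) Y)
  have hk' := card_sdiff_add_card_eq_card (filter_subset (E a₀ ·) Z)
  obtain ⟨g, hg⟩ : ∃ g, m = p a₀ + q b₀ + g := ⟨m - (p a₀ + q b₀), by omega⟩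
  obtain ⟨h, hh⟩ : ∃ h, m = #{a ∈ Y | E a b₀} + #{b ∈ Z | E a₀ b} + h :=
    ⟨m - (#{a ∈ Y | E a b₀} + #{b ∈ Z | E a₀ b}), by omega⟩
  nlinarith [Nat.zero_le (g * h)]

end Bipartite

section Words

variable {ι α : Type*}

def PairDetermined (w : ι → Fin 4 → α) : Prop :=
  ∀ ⦃x y : ι⦄ ⦃i j : Fin 4⦄, i ≠ j → w x i = w y i → w x j = w y j → x = y

def PairCovering (w : ι → Fin 4 → α) : Prop :=
  ∀ v : Fin 4 → α, ∃ x i j, i ≠ j ∧ w x i = v i ∧ w x j = v j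

variable {w : ι → Fin 4 → α}

lemma PairDetermined.comp_perm (h : PairDetermined w) (σ : Equiv.Perm (Fin 4)) :
    PairDetermined fun x k => w x (σ k) :=
  fun _ _ _ _ hij => h (σ.injective.ne hij)

lemma PairCovering.comp_perm (h : PairCovering w) (σ : Equiv.Perm (Fin 4)) :
    PairCovering fun x k => w x (σ k) := by
  intro v
  obtain ⟨x, i, j, hij, hi, hj⟩ := h (v ∘ σ.symm)
  exact ⟨x, σ.symm i, σ.symm j, σ.symm.injective.ne hij, by simpa using hi, by simpa using hj⟩

lemma PairCovering.exists_of_forall_ne (hC : PairCovering w) (v : Fin 4 → α)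
    (hv : ∀ x, w x 0 = v 0 → ∀ k ≠ 0, w x k ≠ v k) :
    ∃ x, w x 1 = v 1 ∧ (w x 2 = v 2 ∨ w x 3 = v 3) ∨ w x 2 = v 2 ∧ w x 3 = v 3 := by
  obtain ⟨x, i, j, hij, hi, hj⟩ := hC v
  have hi0 : i ≠ 0 := by rintro rfl; exact hv x hi j hij.symm hj
  have hj0 : j ≠ 0 := by rintro rfl; exact hv x hj i hij hi
  refine ⟨x, ?_⟩
  fin_cases i <;> fin_cases j <;> simp_all

variable [Fintype ι] [DecidableEq α]

lemma card_le_card_fiber_of_forall_exists {T : Finset α} {i j : Fin 4} {a : α}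
    (hT : ∀ b ∈ T, ∃ x, w x i = a ∧ w x j = b) : #T ≤ #{x | w x i = a} :=
  card_le_card_of_surjOn (w · j) fun b hb => by
    obtain ⟨x, hxi, hxj⟩ := hT b hb
    exact ⟨x, by simpa using hxi, hxj⟩

def fiberImage (w : ι → Fin 4 → α) (r : α) (k : Fin 4) : Finset α :=
  ({x | w x 0 = r} : Finset ι).image (w · k)

lemma mem_fiberImage {x : ι} {r : α} (k : Fin 4) (hx : w x 0 = r) : w x k ∈ fiberImage w r k :=
  mem_image_of_mem _ (by simpa using hx)

lemma card_fiberImage (hD : PairDetermined w) (r : α) {k : Fin 4} (hk : k ≠ 0) :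
    #(fiberImage w r k) = #{x | w x 0 = r} := by
  refine card_image_of_injOn fun x hx y hy hxy => ?_
  exact hD hk.symm ((mem_filter.1 hx).2.trans (mem_filter.1 hy).2.symm) hxy

variable [Fintype α]

lemma sum_card_fiber (w : ι → Fin 4 → α) (i : Fin 4) :
    ∑ a, #{x | w x i = a} = Fintype.card ι :=
  (card_eq_sum_card_fiberwise fun x _ => mem_univ (w x i)).symm

-- The word `(r, c, a, b)`, with `c` a column missing from row `r`, is covered through column `c`.
lemma card_compl_fiberImage_le (hC : PairCovering w) {r a b : α} (ha : a ∉ fiberImage w r 2)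
    (hb : b ∉ fiberImage w r 3) (hab : ¬ ∃ x, w x 2 = a ∧ w x 3 = b) :
    #(fiberImage w r 1)ᶜ ≤ #{x | w x 2 = a} + #{x | w x 3 = b} := by
  classical
  set T₁ := {c ∈ (fiberImage w r 1)ᶜ | ∃ x, w x 2 = a ∧ w x 1 = c}
  set T₂ := {c ∈ (fiberImage w r 1)ᶜ | ∃ x, w x 3 = b ∧ w x 1 = c}
  have hsub : (fiberImage w r 1)ᶜ ⊆ T₁ ∪ T₂ := by
    intro c hc
    have hfree : ∀ k ≠ 0, ![r, c, a, b] k ∉ fiberImage w r k := by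
      intro k hk
      fin_cases k <;> simp_all
    obtain ⟨x, ⟨h1, h2 | h3⟩ | h23⟩ := hC.exists_of_forall_ne ![r, c, a, b]
      fun x hx k hk hxk => hfree k hk (hxk ▸ mem_fiberImage k hx)
    · exact mem_union_left _ (mem_filter.2 ⟨hc, x, h2, h1⟩)
    · exact mem_union_right _ (mem_filter.2 ⟨hc, x, h3, h1⟩)
    · exact absurd ⟨x, h23⟩ hab
  calc #(fiberImage w r 1)ᶜ ≤ #(T₁ ∪ T₂) := card_le_card hsub
    _ ≤ #T₁ + #T₂ := card_union_le _ _
    _ ≤ _ := add_le_add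
      (card_le_card_fiber_of_forall_exists fun c hc => (mem_filter.1 hc).2)
      (card_le_card_fiber_of_forall_exists fun c hc => (mem_filter.1 hc).2)

theorem card_eq_three_mul_of_card_fiber_zero (hD : PairDetermined w) (hC : PairCovering w)
    (hcard : 3 * Fintype.card ι = Fintype.card α ^ 2) {μ : ℕ}
    (hmin : ∀ j a, μ ≤ #{x | w x j = a}) {r : α} (hr : #{x | w x 0 = r} = μ) :
    Fintype.card α = 3 * μ := by
  set m := Fintype.card α - μ
  have card_compl {k} (hk : k ≠ 0) : #(fiberImage w r k)ᶜ = m := by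
    rw [card_compl, card_fiberImage hD r hk, hr]
  have hμ : μ ≤ Fintype.card α := hr ▸ card_fiberImage hD r (k := 1) (by decide) ▸ card_le_univ _
  have hsq := sq_le_sum_add_sum_of_not_rel (card_compl (k := 2) (by decide))
    (card_compl (k := 3) (by decide)) _ _ (fun a b => ∃ x, w x 2 = a ∧ w x 3 = b)
    (fun a ha b hb hab => card_compl (k := 1) (by decide) ▸
      card_compl_fiberImage_le hC (mem_compl.1 ha) (mem_compl.1 hb) hab)
    (fun _ _ _ _ hT => card_le_card_fiber_of_forall_exists hT)
    (fun _ _ _ _ hT => card_le_card_fiber_of_forall_exists fun a ha => (hT a ha).imp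
      fun _ => And.symm)
  have budget {k} (hk : k ≠ 0) :
      ∑ a ∈ (fiberImage w r k)ᶜ, #{x | w x k = a} + μ * μ ≤ Fintype.card ι := by
    have := card_nsmul_le_sum (fiberImage w r k) _ μ fun a _ => hmin k a
    rw [card_fiberImage hD r hk, hr, smul_eq_mul] at this
    rw [← sum_card_fiber w k, ← sum_compl_add_sum (fiberImage w r k)]
    omega
  have h2 := budget (k := 2) (by decide)
  have h3 := budget (k := 3) (by decide)
  have hsq0 : ((m : ℤ) - 2 * μ) ^ 2 = 0 := by
    refine le_antisymm ?_ (sq_nonneg _)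
    have hn : (Fintype.card α : ℤ) = m + μ := by omega
    have hcardZ : 3 * (Fintype.card ι : ℤ) = (Fintype.card α : ℤ) ^ 2 := by exact_mod_cast hcard
    nlinarith
  have := pow_eq_zero_iff two_ne_zero |>.1 hsq0
  omega

theorem card_eq_three_mul_of_card_fiber (hD : PairDetermined w) (hC : PairCovering w)
    (hcard : 3 * Fintype.card ι = Fintype.card α ^ 2) {μ : ℕ}
    (hmin : ∀ j a, μ ≤ #{x | w x j = a}) {i : Fin 4} {a : α} (ha : #{x | w x i = a} = μ) :
    Fintype.card α = 3 * μ := by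
  let σ := Equiv.swap 0 i
  exact card_eq_three_mul_of_card_fiber_zero (hD.comp_perm σ) (hC.comp_perm σ) hcard
    (fun j b => hmin (σ j) b) (by simpa [σ] using ha)

theorem exists_card_eq_three_mul_forall_card_fiber_eq (hD : PairDetermined w)
    (hC : PairCovering w) (hcard : 3 * Fintype.card ι = Fintype.card α ^ 2) :
    ∃ μ, Fintype.card α = 3 * μ ∧ ∀ i a, #{x | w x i = a} = μ := by
  rcases isEmpty_or_nonempty α with _ | _
  · exact ⟨0, by simp, fun _ a => isEmptyElim a⟩
  obtain ⟨⟨i₀, a₀⟩, -, hmin⟩ :=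
    exists_min_image univ (fun ia : Fin 4 × α => #{x | w x ia.1 = ia.2}) univ_nonempty
  have hmin' : ∀ i a, #{x | w x i₀ = a₀} ≤ #{x | w x i = a} := fun i a => hmin (i, a) (mem_univ _)
  have hα3 := card_eq_three_mul_of_card_fiber hD hC hcard hmin' rfl
  refine ⟨_, hα3, fun i a => ?_⟩
  have hsum : ∑ b, #{x | w x i = b} = ∑ _b : α, #{x | w x i₀ = a₀} := by
    rw [sum_card_fiber, sum_const, card_univ, smul_eq_mul]
    rw [hα3] at hcard
    nlinarith
  exact ((sum_eq_sum_iff_of_le fun b _ => hmin' i b).1 hsum.symm a (mem_univ a)).symm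

end Words

section OPLS

variable {n : ℕ} {M : Fin n → Fin n → Option (Fin n × Fin n)}

abbrev OPLSEntry (M : Fin n → Fin n → Option (Fin n × Fin n)) : Type :=
  {u : Fin 4 → Fin n // M (u 0) (u 1) = some (u 2, u 3)}

def OPLSEntry.ofCell {r c : Fin n} {p : Fin n × Fin n} (h : M r c = some p) : OPLSEntry M :=
  ⟨![r, c, p.1, p.2], h⟩

lemma OPLSEntry.ext_of_cell {x y : OPLSEntry M} (h0 : x.1 0 = y.1 0) (h1 : x.1 1 = y.1 1) :
    x = y := by
  have h := x.2
  rw [h0, h1, y.2, Option.some_inj, Prod.mk.injEq] at h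
  refine Subtype.ext (funext fun k => ?_)
  fin_cases k
  exacts [h0, h1, h.1.symm, h.2.symm]

lemma OPLSEntry.cell_eq_of_eq_of_eq (hM : IsOPLS M) {x y : OPLSEntry M} {i j : Fin 4} (hij : i < j)
    (hi : x.1 i = y.1 i) (hj : x.1 j = y.1 j) : x.1 0 = y.1 0 ∧ x.1 1 = y.1 1 := by
  obtain ⟨h02, h12, h03, h13, h23⟩ := hM
  have hx := x.2
  have hy := y.2
  obtain ⟨rfl, rfl⟩ | ⟨rfl, rfl⟩ | ⟨rfl, rfl⟩ | ⟨rfl, rfl⟩ | ⟨rfl, rfl⟩ | ⟨rfl, rfl⟩ :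
      i = 0 ∧ j = 1 ∨ i = 0 ∧ j = 2 ∨ i = 0 ∧ j = 3 ∨ i = 1 ∧ j = 2 ∨ i = 1 ∧ j = 3 ∨
        i = 2 ∧ j = 3 := by
    fin_cases i <;> fin_cases j <;> simp at hij ⊢
  · exact ⟨hi, hj⟩
  · exact ⟨hi, h02 _ _ _ _ _ hx (hi ▸ hy) hj⟩
  · exact ⟨hi, h03 _ _ _ _ _ hx (hi ▸ hy) hj⟩
  · exact ⟨h12 _ _ _ _ _ hx (hi ▸ hy) hj, hi⟩
  · exact ⟨h13 _ _ _ _ _ hx (hi ▸ hy) hj, hi⟩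
  · exact h23 _ _ _ _ _ hx (by rw [hi, hj]; exact hy)

theorem isOPLS_iff_pairDetermined :
    IsOPLS M ↔ PairDetermined (Subtype.val : OPLSEntry M → Fin 4 → Fin n) := by
  constructor
  · intro hM x y i j hij hi hj
    obtain ⟨h0, h1⟩ := hij.lt_or_gt.elim (OPLSEntry.cell_eq_of_eq_of_eq hM · hi hj)
      (OPLSEntry.cell_eq_of_eq_of_eq hM · hj hi)
    exact OPLSEntry.ext_of_cell h0 h1
  · intro hD
    have eq {r c r' c' : Fin n} {p q : Fin n × Fin n} (hp : M r c = some p)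
        (hq : M r' c' = some q) {i j : Fin 4} (hij : i ≠ j)
        (hi : ![r, c, p.1, p.2] i = ![r', c', q.1, q.2] i)
        (hj : ![r, c, p.1, p.2] j = ![r', c', q.1, q.2] j) :
        ![r, c, p.1, p.2] = ![r', c', q.1, q.2] :=
      congrArg Subtype.val (hD (x := OPLSEntry.ofCell hp) (y := OPLSEntry.ofCell hq) hij hi hj)
    refine ⟨fun r c c' p q hp hq h => ?_, fun r r' c p q hp hq h => ?_,
      fun r c c' p q hp hq h => ?_, fun r r' c p q hp hq h => ?_, fun r c r' c' p hp hq => ?_⟩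
    · exact congrFun (eq hp hq (i := 0) (j := 2) (by decide) rfl h) 1
    · exact congrFun (eq hp hq (i := 1) (j := 2) (by decide) rfl h) 0
    · exact congrFun (eq hp hq (i := 0) (j := 3) (by decide) rfl h) 1
    · exact congrFun (eq hp hq (i := 1) (j := 3) (by decide) rfl h) 0
    · have := eq hp hq (i := 2) (j := 3) (by decide) rfl rfl
      exact ⟨congrFun this 0, congrFun this 1⟩

lemma IsOPLS.fill_of_forall_ne (hM : IsOPLS M) (v : Fin 4 → Fin n)
    (hv : ∀ (x : OPLSEntry M) (i j), i ≠ j → x.1 i = v i → x.1 j ≠ v j) :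
    IsOPLS fun r c => if r = v 0 ∧ c = v 1 then some (v 2, v 3) else M r c := by
  have entry (x : OPLSEntry fun r c => if r = v 0 ∧ c = v 1 then some (v 2, v 3) else M r c) :
      x.1 = v ∨ M (x.1 0) (x.1 1) = some (x.1 2, x.1 3) := by
    obtain ⟨u, hu⟩ := x
    dsimp only at hu ⊢
    by_cases h : u 0 = v 0 ∧ u 1 = v 1
    · rw [if_pos h, Option.some_inj, Prod.mk.injEq] at hu
      refine .inl (funext fun k => ?_)
      fin_cases k
      exacts [h.1, h.2, hu.1.symm, hu.2.symm]
    · rw [if_neg h] at hu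
      exact .inr hu
  rw [isOPLS_iff_pairDetermined] at hM ⊢
  intro x y i j hij hi hj
  rcases entry x with hx | hx <;> rcases entry y with hy | hy
  · exact Subtype.ext (hx.trans hy.symm)
  · exact (hv ⟨y.1, hy⟩ i j hij (hi.symm.trans (congrFun hx i))
      (hj.symm.trans (congrFun hx j))).elim
  · exact (hv ⟨x.1, hx⟩ i j hij (hi.trans (congrFun hy i)) (hj.trans (congrFun hy j))).elim
  · have := hM (x := ⟨x.1, hx⟩) (y := ⟨y.1, hy⟩) hij hi hj
    exact Subtype.ext (congrArg (fun z : OPLSEntry M => z.1) this)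

theorem IsMaximalOPLS.pairCovering (hM : IsMaximalOPLS M) :
    PairCovering (Subtype.val : OPLSEntry M → Fin 4 → Fin n) := by
  intro v
  by_contra! hv
  have hempty : M (v 0) (v 1) = none := by
    refine Option.eq_none_iff_forall_ne_some.2 fun p h => ?_
    exact hv (OPLSEntry.ofCell h) 0 1 (by decide) rfl rfl
  exact hM.2 (v 0) (v 1) (v 2, v 3) hempty (hM.1.fill_of_forall_ne v hv)

lemma card_filter_oplsEntry_eq_card_filter_cell (Q : OPLSEntry M → Prop) [DecidablePred Q]
    (P : Fin n × Fin n → Prop) [DecidablePred P] (hQP : ∀ x, Q x ↔ P (x.1 0, x.1 1))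
    (hP : ∀ rc, P rc → (M rc.1 rc.2).isSome) :
    #{x | Q x} = #{rc | P rc} := by
  refine card_bij (fun x _ => (x.1 0, x.1 1)) (fun x hx => ?_) (fun x _ y _ h => ?_)
    fun rc hrc => ?_
  · simpa [hQP] using hx
  · exact OPLSEntry.ext_of_cell (congrArg Prod.fst h) (congrArg Prod.snd h)
  · have hrc := (mem_filter.1 hrc).2
    obtain ⟨p, hp⟩ := Option.isSome_iff_exists.1 (hP rc hrc)
    exact ⟨OPLSEntry.ofCell hp, by simpa [hQP, OPLSEntry.ofCell] using hrc, rfl⟩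

lemma card_oplsEntry : Fintype.card (OPLSEntry M) = oplsSize M := by
  rw [← card_univ, ← filter_true univ, oplsSize]
  apply card_filter_oplsEntry_eq_card_filter_cell <;> simp +contextual

lemma card_filter_oplsEntry_zero (r : Fin n) :
    #{x : OPLSEntry M | x.1 0 = r} = oplsRowFreq M r := by
  rw [oplsRowFreq]
  refine card_bij (fun x _ => x.1 1) (fun x hx => ?_) (fun x hx y hy h => ?_) fun c hc => ?_
  · simp [← (mem_filter.1 hx).2, x.2]
  · exact OPLSEntry.ext_of_cell ((mem_filter.1 hx).2.trans (mem_filter.1 hy).2.symm) h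
  · obtain ⟨p, hp⟩ := Option.isSome_iff_exists.1 (mem_filter.1 hc).2
    exact ⟨OPLSEntry.ofCell hp, by simp [OPLSEntry.ofCell], rfl⟩

lemma card_filter_oplsEntry_one (c : Fin n) :
    #{x : OPLSEntry M | x.1 1 = c} = oplsColFreq M c := by
  rw [oplsColFreq]
  refine card_bij (fun x _ => x.1 0) (fun x hx => ?_) (fun x hx y hy h => ?_) fun r hr => ?_
  · simp [← (mem_filter.1 hx).2, x.2]
  · exact OPLSEntry.ext_of_cell h ((mem_filter.1 hx).2.trans (mem_filter.1 hy).2.symm)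
  · obtain ⟨p, hp⟩ := Option.isSome_iff_exists.1 (mem_filter.1 hr).2
    exact ⟨OPLSEntry.ofCell hp, by simp [OPLSEntry.ofCell], rfl⟩

lemma card_filter_oplsEntry_two (s : Fin n) :
    #{x : OPLSEntry M | x.1 2 = s} = oplsFstFreq M s := by
  rw [oplsFstFreq]
  apply card_filter_oplsEntry_eq_card_filter_cell
  · intro x
    simp [x.2]
  · intro rc h
    simpa using congrArg Option.isSome h

lemma card_filter_oplsEntry_three (s : Fin n) :
    #{x : OPLSEntry M | x.1 3 = s} = oplsSndFreq M s := by
  rw [oplsSndFreq]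
  apply card_filter_oplsEntry_eq_card_filter_cell
  · intro x
    simp [x.2]
  · intro rc h
    simpa using congrArg Option.isSome h

end OPLS

/-- A maximal OPLS(n) with exactly n²/3 filled cells has every row, column,
first-entry and second-entry frequency equal to n/3 (so 3 ∣ n); conversely if
every row frequency is n/3 then there are n²/3 filled cells. -/
theorem stmt_8 {n : ℕ} (M : Fin n → Fin n → Option (Fin n × Fin n))
    (hM : IsMaximalOPLS M) :
    (3 * oplsSize M = n ^ 2 →
      (3 ∣ n ∧ (∀ r, 3 * oplsRowFreq M r = n) ∧ (∀ c, 3 * oplsColFreq M c = n) ∧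
        (∀ s, 3 * oplsFstFreq M s = n) ∧ (∀ s, 3 * oplsSndFreq M s = n))) ∧
    ((∀ r, 3 * oplsRowFreq M r = n) → 3 * oplsSize M = n ^ 2) := by
  refine ⟨fun hsize => ?_, fun hrow => ?_⟩
  · obtain ⟨μ, hn, hfiber⟩ := exists_card_eq_three_mul_forall_card_fiber_eq
      (isOPLS_iff_pairDetermined.1 hM.1) hM.pairCovering
      (by rw [card_oplsEntry, Fintype.card_fin, hsize])
    rw [Fintype.card_fin] at hn
    refine ⟨⟨μ, hn⟩, fun r => ?_, fun c => ?_, fun s => ?_, fun s => ?_⟩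
    · rw [← card_filter_oplsEntry_zero, hfiber, hn]
    · rw [← card_filter_oplsEntry_one, hfiber, hn]
    · rw [← card_filter_oplsEntry_two, hfiber, hn]
    · rw [← card_filter_oplsEntry_three, hfiber, hn]
  · rw [← card_oplsEntry, ← sum_card_fiber Subtype.val 0, mul_sum]
    simp only [card_filter_oplsEntry_zero, hrow, sum_const, card_univ, Fintype.card_fin,
      smul_eq_mul]
    ring
end

section
/- Let n ≥ 21 and construct an n×n array M by placing three pairs of orthogonal Latin squares (superimposed pairs) down the leading diagonal, of orders a₁, a₂, a₃ with a₁ + a₂ + a₃ = n and each aᵢ ∈ {⌊n/3⌋, ⌊n/3⌋+1}, where the three squares use pairwise disjoint symbol sets whose union is [n] (used as both first-entry and second-entry alphabets blockwise), and all other cells empty. Then M is a maximal orthogonal partial Latin square of order n with ⌈n²/3⌉ filled cells. -/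
/-- The cells (r,c) with b ≤ r,c < b+a of `M` form a superimposed pair of
orthogonal Latin squares of order `a` on the symbol set `S` (used for both
first and second entries): all block cells are filled from S×S, every symbol of
S occurs in every block row and block column in each coordinate, and every
ordered pair from S×S occurs. -/
def IsOLSBlock {n : ℕ} (M : Fin n → Fin n → Option (Fin n × Fin n))
    (b a : ℕ) (S : Finset (Fin n)) : Prop :=
  S.card = a ∧
  (∀ r c : Fin n, b ≤ (r : ℕ) → (r : ℕ) < b + a → b ≤ (c : ℕ) → (c : ℕ) < b + a →
    ∃ p : Fin n × Fin n, M r c = some p ∧ p.1 ∈ S ∧ p.2 ∈ S) ∧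
  (∀ r : Fin n, b ≤ (r : ℕ) → (r : ℕ) < b + a → ∀ s ∈ S,
    ∃ c : Fin n, b ≤ (c : ℕ) ∧ (c : ℕ) < b + a ∧ (M r c).map Prod.fst = some s) ∧
  (∀ c : Fin n, b ≤ (c : ℕ) → (c : ℕ) < b + a → ∀ s ∈ S,
    ∃ r : Fin n, b ≤ (r : ℕ) ∧ (r : ℕ) < b + a ∧ (M r c).map Prod.fst = some s) ∧
  (∀ r : Fin n, b ≤ (r : ℕ) → (r : ℕ) < b + a → ∀ s ∈ S,
    ∃ c : Fin n, b ≤ (c : ℕ) ∧ (c : ℕ) < b + a ∧ (M r c).map Prod.snd = some s) ∧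
  (∀ c : Fin n, b ≤ (c : ℕ) → (c : ℕ) < b + a → ∀ s ∈ S,
    ∃ r : Fin n, b ≤ (r : ℕ) ∧ (r : ℕ) < b + a ∧ (M r c).map Prod.snd = some s) ∧
  (∀ s ∈ S, ∀ u ∈ S, ∃ r c : Fin n, b ≤ (r : ℕ) ∧ (r : ℕ) < b + a ∧
    b ≤ (c : ℕ) ∧ (c : ℕ) < b + a ∧ M r c = some (s, u))

/-- `M` consists of three diagonal OLS blocks of orders a₁, a₂, a₃ on pairwise
disjoint symbol sets S₁, S₂, S₃, all other cells being empty. -/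
def IsThreeBlockDiagonal {n : ℕ} (M : Fin n → Fin n → Option (Fin n × Fin n))
    (a₁ a₂ a₃ : ℕ) (S₁ S₂ S₃ : Finset (Fin n)) : Prop :=
  Disjoint S₁ S₂ ∧ Disjoint S₁ S₃ ∧ Disjoint S₂ S₃ ∧
  IsOLSBlock M 0 a₁ S₁ ∧ IsOLSBlock M a₁ a₂ S₂ ∧ IsOLSBlock M (a₁ + a₂) a₃ S₃ ∧
  (∀ r c : Fin n, (M r c).isSome →
    (((r : ℕ) < a₁ ∧ (c : ℕ) < a₁) ∨
     (a₁ ≤ (r : ℕ) ∧ (r : ℕ) < a₁ + a₂ ∧ a₁ ≤ (c : ℕ) ∧ (c : ℕ) < a₁ + a₂) ∨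
     (a₁ + a₂ ≤ (r : ℕ) ∧ a₁ + a₂ ≤ (c : ℕ))))

open Finset

lemma card_blk {n : ℕ} (b a : ℕ) (h : b + a ≤ n) :
    (Finset.univ.filter (fun r : Fin n => b ≤ (r:ℕ) ∧ (r:ℕ) < b + a)).card = a := by
  have key : (Finset.univ.filter (fun r : Fin n => b ≤ (r:ℕ) ∧ (r:ℕ) < b + a)).card
      = (Finset.Ico b (b + a)).card := by
    refine Finset.card_bij (fun (r : Fin n) _ => (r : ℕ)) ?_ ?_ ?_
    · intro x hx; simp only [mem_filter, mem_univ, true_and] at hx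
      simp [Finset.mem_Ico]; omega
    · intro x _ y _ hxy; exact Fin.val_injective hxy
    · intro x hx; simp only [Finset.mem_Ico] at hx
      have hxn : x < n := by omega
      exact ⟨⟨x, hxn⟩, by simp; omega, rfl⟩
  rw [key, Nat.card_Ico]; omega

lemma blk_entry {n : ℕ} {M : Fin n → Fin n → Option (Fin n × Fin n)} {b a : ℕ}
    {S : Finset (Fin n)} (hB : IsOLSBlock M b a S) {r c : Fin n} {p : Fin n × Fin n}
    (hr1 : b ≤ (r:ℕ)) (hr2 : (r:ℕ) < b + a) (hc1 : b ≤ (c:ℕ)) (hc2 : (c:ℕ) < b + a)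
    (hp : M r c = some p) : p.1 ∈ S ∧ p.2 ∈ S := by
  obtain ⟨q, hq, h1, h2⟩ := hB.2.1 r c hr1 hr2 hc1 hc2
  rw [hp] at hq; cases Option.some.inj hq; exact ⟨h1, h2⟩

lemma blk_row_fst {n : ℕ} {M : Fin n → Fin n → Option (Fin n × Fin n)} {b a : ℕ}
    {S : Finset (Fin n)} (hB : IsOLSBlock M b a S) (hba : b + a ≤ n)
    {r c c' : Fin n} {p q : Fin n × Fin n}
    (hr1 : b ≤ (r:ℕ)) (hr2 : (r:ℕ) < b + a)
    (hc1 : b ≤ (c:ℕ)) (hc2 : (c:ℕ) < b + a)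
    (hc1' : b ≤ (c':ℕ)) (hc2' : (c':ℕ) < b + a)
    (hp : M r c = some p) (hq : M r c' = some q) (hpq : p.1 = q.1) : c = c' := by
  classical
  have hS : S.Nonempty := by rw [← Finset.card_pos, hB.1]; omega
  obtain ⟨s₀, hs₀⟩ := hS
  have hcard : (Finset.univ.filter (fun x : Fin n => b ≤ (x:ℕ) ∧ (x:ℕ) < b + a)).card = a :=
    card_blk b a hba
  refine Finset.inj_on_of_surj_on_of_card_le
    (t := S) (fun x _ => (((M r x).map Prod.fst).getD s₀)) ?_ ?_
    (by rw [hcard, hB.1]) (by simp; omega) (by simp; omega) (by simp [hp, hq, hpq])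
  · intro x hx
    simp only [mem_filter, mem_univ, true_and] at hx
    obtain ⟨pp, hpp, h1, _⟩ := hB.2.1 r x hr1 hr2 hx.1 hx.2
    simpa [hpp] using h1
  · intro s hs
    obtain ⟨x, hx1, hx2, hx3⟩ := hB.2.2.1 r hr1 hr2 s hs
    exact ⟨x, by simp; omega, by simp [hx3]⟩

lemma blk_col_fst {n : ℕ} {M : Fin n → Fin n → Option (Fin n × Fin n)} {b a : ℕ}
    {S : Finset (Fin n)} (hB : IsOLSBlock M b a S) (hba : b + a ≤ n)
    {r r' c : Fin n} {p q : Fin n × Fin n}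
    (hc1 : b ≤ (c:ℕ)) (hc2 : (c:ℕ) < b + a)
    (hr1 : b ≤ (r:ℕ)) (hr2 : (r:ℕ) < b + a)
    (hr1' : b ≤ (r':ℕ)) (hr2' : (r':ℕ) < b + a)
    (hp : M r c = some p) (hq : M r' c = some q) (hpq : p.1 = q.1) : r = r' := by
  classical
  have hS : S.Nonempty := by rw [← Finset.card_pos, hB.1]; omega
  obtain ⟨s₀, hs₀⟩ := hS
  have hcard : (Finset.univ.filter (fun x : Fin n => b ≤ (x:ℕ) ∧ (x:ℕ) < b + a)).card = a :=
    card_blk b a hba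
  refine Finset.inj_on_of_surj_on_of_card_le
    (t := S) (fun x _ => (((M x c).map Prod.fst).getD s₀)) ?_ ?_
    (by rw [hcard, hB.1]) (by simp; omega) (by simp; omega) (by simp [hp, hq, hpq])
  · intro x hx
    simp only [mem_filter, mem_univ, true_and] at hx
    obtain ⟨pp, hpp, h1, _⟩ := hB.2.1 x c hx.1 hx.2 hc1 hc2
    simpa [hpp] using h1
  · intro s hs
    obtain ⟨x, hx1, hx2, hx3⟩ := hB.2.2.2.1 c hc1 hc2 s hs
    exact ⟨x, by simp; omega, by simp [hx3]⟩

lemma blk_row_snd {n : ℕ} {M : Fin n → Fin n → Option (Fin n × Fin n)} {b a : ℕ}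
    {S : Finset (Fin n)} (hB : IsOLSBlock M b a S) (hba : b + a ≤ n)
    {r c c' : Fin n} {p q : Fin n × Fin n}
    (hr1 : b ≤ (r:ℕ)) (hr2 : (r:ℕ) < b + a)
    (hc1 : b ≤ (c:ℕ)) (hc2 : (c:ℕ) < b + a)
    (hc1' : b ≤ (c':ℕ)) (hc2' : (c':ℕ) < b + a)
    (hp : M r c = some p) (hq : M r c' = some q) (hpq : p.2 = q.2) : c = c' := by
  classical
  have hS : S.Nonempty := by rw [← Finset.card_pos, hB.1]; omega
  obtain ⟨s₀, hs₀⟩ := hS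
  have hcard : (Finset.univ.filter (fun x : Fin n => b ≤ (x:ℕ) ∧ (x:ℕ) < b + a)).card = a :=
    card_blk b a hba
  refine Finset.inj_on_of_surj_on_of_card_le
    (t := S) (fun x _ => (((M r x).map Prod.snd).getD s₀)) ?_ ?_
    (by rw [hcard, hB.1]) (by simp; omega) (by simp; omega) (by simp [hp, hq, hpq])
  · intro x hx
    simp only [mem_filter, mem_univ, true_and] at hx
    obtain ⟨pp, hpp, _, h2⟩ := hB.2.1 r x hr1 hr2 hx.1 hx.2
    simpa [hpp] using h2
  · intro s hs
    obtain ⟨x, hx1, hx2, hx3⟩ := hB.2.2.2.2.1 r hr1 hr2 s hs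
    exact ⟨x, by simp; omega, by simp [hx3]⟩

lemma blk_col_snd {n : ℕ} {M : Fin n → Fin n → Option (Fin n × Fin n)} {b a : ℕ}
    {S : Finset (Fin n)} (hB : IsOLSBlock M b a S) (hba : b + a ≤ n)
    {r r' c : Fin n} {p q : Fin n × Fin n}
    (hc1 : b ≤ (c:ℕ)) (hc2 : (c:ℕ) < b + a)
    (hr1 : b ≤ (r:ℕ)) (hr2 : (r:ℕ) < b + a)
    (hr1' : b ≤ (r':ℕ)) (hr2' : (r':ℕ) < b + a)
    (hp : M r c = some p) (hq : M r' c = some q) (hpq : p.2 = q.2) : r = r' := by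
  classical
  have hS : S.Nonempty := by rw [← Finset.card_pos, hB.1]; omega
  obtain ⟨s₀, hs₀⟩ := hS
  have hcard : (Finset.univ.filter (fun x : Fin n => b ≤ (x:ℕ) ∧ (x:ℕ) < b + a)).card = a :=
    card_blk b a hba
  refine Finset.inj_on_of_surj_on_of_card_le
    (t := S) (fun x _ => (((M x c).map Prod.snd).getD s₀)) ?_ ?_
    (by rw [hcard, hB.1]) (by simp; omega) (by simp; omega) (by simp [hp, hq, hpq])
  · intro x hx
    simp only [mem_filter, mem_univ, true_and] at hx
    obtain ⟨pp, hpp, _, h2⟩ := hB.2.1 x c hx.1 hx.2 hc1 hc2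
    simpa [hpp] using h2
  · intro s hs
    obtain ⟨x, hx1, hx2, hx3⟩ := hB.2.2.2.2.2.1 c hc1 hc2 s hs
    exact ⟨x, by simp; omega, by simp [hx3]⟩

lemma blk_pair {n : ℕ} {M : Fin n → Fin n → Option (Fin n × Fin n)} {b a : ℕ}
    {S : Finset (Fin n)} (hB : IsOLSBlock M b a S) (hba : b + a ≤ n)
    {r c r' c' : Fin n} {p : Fin n × Fin n}
    (hr1 : b ≤ (r:ℕ)) (hr2 : (r:ℕ) < b + a)
    (hc1 : b ≤ (c:ℕ)) (hc2 : (c:ℕ) < b + a)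
    (hr1' : b ≤ (r':ℕ)) (hr2' : (r':ℕ) < b + a)
    (hc1' : b ≤ (c':ℕ)) (hc2' : (c':ℕ) < b + a)
    (hp : M r c = some p) (hq : M r' c' = some p) : r = r' ∧ c = c' := by
  classical
  have hS : S.Nonempty := by rw [← Finset.card_pos, hB.1]; omega
  obtain ⟨s₀, hs₀⟩ := hS
  have hcols : (Finset.univ.filter (fun x : Fin n => b ≤ (x:ℕ) ∧ (x:ℕ) < b + a)).card = a :=
    card_blk b a hba
  set D : Finset (Fin n × Fin n) := Finset.univ.filter
    (fun rc : Fin n × Fin n => (b ≤ (rc.1:ℕ) ∧ (rc.1:ℕ) < b + a) ∧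
      (b ≤ (rc.2:ℕ) ∧ (rc.2:ℕ) < b + a)) with hD
  have hDeq : D = (Finset.univ.filter (fun x : Fin n => b ≤ (x:ℕ) ∧ (x:ℕ) < b + a)) ×ˢ
      (Finset.univ.filter (fun x : Fin n => b ≤ (x:ℕ) ∧ (x:ℕ) < b + a)) := by
    ext x; simp [hD, Finset.mem_product, and_assoc]
  have hDcard : D.card = a * a := by
    rw [hDeq, Finset.card_product, hcols]
  have key : ∀ x ∈ D, ∀ y ∈ D,
      (fun rc : Fin n × Fin n => ((M rc.1 rc.2).getD (s₀, s₀))) x =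
      (fun rc : Fin n × Fin n => ((M rc.1 rc.2).getD (s₀, s₀))) y → x = y := by
    intro x hx y hy hxy
    refine Finset.inj_on_of_surj_on_of_card_le (t := S ×ˢ S)
      (fun rc _ => ((M rc.1 rc.2).getD (s₀, s₀))) ?_ ?_
      (by rw [hDcard, Finset.card_product, hB.1]) hx hy hxy
    · intro z hz
      simp only [hD, mem_filter, mem_univ, true_and] at hz
      obtain ⟨pp, hpp, h1, h2⟩ := hB.2.1 z.1 z.2 hz.1.1 hz.1.2 hz.2.1 hz.2.2
      simp [hpp, Finset.mem_product, h1, h2]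
    · intro u hu
      simp only [Finset.mem_product] at hu
      obtain ⟨rr, cc, h1, h2, h3, h4, h5⟩ := hB.2.2.2.2.2.2 u.1 hu.1 u.2 hu.2
      refine ⟨(rr, cc), by simp [hD]; exact ⟨⟨h1, h2⟩, h3, h4⟩, by simp [h5]⟩
  have := key (r, c) (by simp [hD]; exact ⟨⟨hr1, hr2⟩, hc1, hc2⟩)
    (r', c') (by simp [hD]; exact ⟨⟨hr1', hr2'⟩, hc1', hc2'⟩) (by simp [hp, hq])
  exact ⟨congrArg Prod.fst this, congrArg Prod.snd this⟩

lemma insert_contra {n : ℕ} {M : Fin n → Fin n → Option (Fin n × Fin n)}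
    {bi ai bj aj bk ak : ℕ} {Si Sj Sk : Finset (Fin n)}
    (hBi : IsOLSBlock M bi ai Si) (hBj : IsOLSBlock M bj aj Sj)
    (hBk : IsOLSBlock M bk ak Sk)
    (r c : Fin n) (p : Fin n × Fin n)
    (hri : bi ≤ (r:ℕ) ∧ (r:ℕ) < bi + ai) (hcj : bj ≤ (c:ℕ) ∧ (c:ℕ) < bj + aj)
    (hci : ¬(bi ≤ (c:ℕ) ∧ (c:ℕ) < bi + ai)) (hrj : ¬(bj ≤ (r:ℕ) ∧ (r:ℕ) < bj + aj))
    (hrk : ¬(bk ≤ (r:ℕ) ∧ (r:ℕ) < bk + ak))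
    (hcov1 : p.1 ∈ Si ∨ p.1 ∈ Sj ∨ p.1 ∈ Sk)
    (hcov2 : p.2 ∈ Si ∨ p.2 ∈ Sj ∨ p.2 ∈ Sk)
    (hO : IsOPLS (fun r' c' => if r' = r ∧ c' = c then some p else M r' c')) : False := by
  have hMrc : (fun r' c' => if r' = r ∧ c' = c then some p else M r' c') r c = some p := by
    simp
  have hnotSi : p.1 ∉ Si := by
    intro h
    obtain ⟨c'', h1, h2, h3⟩ := hBi.2.2.1 r hri.1 hri.2 p.1 h
    obtain ⟨q, hq, hq1⟩ := Option.map_eq_some_iff.mp h3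
    have hcne : c'' ≠ c := by intro he; rw [he] at h1 h2; exact hci ⟨h1, h2⟩
    have hq' : (fun r' c' => if r' = r ∧ c' = c then some p else M r' c') r c''
        = some q := by simp [hcne]; exact hq
    have := hO.1 r c c'' p q hMrc hq' hq1.symm
    exact hcne this.symm
  have hnotSj1 : p.1 ∉ Sj := by
    intro h
    obtain ⟨r'', h1, h2, h3⟩ := hBj.2.2.2.1 c hcj.1 hcj.2 p.1 h
    obtain ⟨q, hq, hq1⟩ := Option.map_eq_some_iff.mp h3
    have hrne : r'' ≠ r := by intro he; rw [he] at h1 h2; exact hrj ⟨h1, h2⟩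
    have hq' : (fun r' c' => if r' = r ∧ c' = c then some p else M r' c') r'' c
        = some q := by simp [hrne]; exact hq
    have := hO.2.1 r r'' c p q hMrc hq' hq1.symm
    exact hrne this.symm
  have hnotSi2 : p.2 ∉ Si := by
    intro h
    obtain ⟨c'', h1, h2, h3⟩ := hBi.2.2.2.2.1 r hri.1 hri.2 p.2 h
    obtain ⟨q, hq, hq1⟩ := Option.map_eq_some_iff.mp h3
    have hcne : c'' ≠ c := by intro he; rw [he] at h1 h2; exact hci ⟨h1, h2⟩
    have hq' : (fun r' c' => if r' = r ∧ c' = c then some p else M r' c') r c''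
        = some q := by simp [hcne]; exact hq
    have := hO.2.2.1 r c c'' p q hMrc hq' hq1.symm
    exact hcne this.symm
  have hnotSj2 : p.2 ∉ Sj := by
    intro h
    obtain ⟨r'', h1, h2, h3⟩ := hBj.2.2.2.2.2.1 c hcj.1 hcj.2 p.2 h
    obtain ⟨q, hq, hq1⟩ := Option.map_eq_some_iff.mp h3
    have hrne : r'' ≠ r := by intro he; rw [he] at h1 h2; exact hrj ⟨h1, h2⟩
    have hq' : (fun r' c' => if r' = r ∧ c' = c then some p else M r' c') r'' c
        = some q := by simp [hrne]; exact hq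
    have := hO.2.2.2.1 r r'' c p q hMrc hq' hq1.symm
    exact hrne this.symm
  have hk1 : p.1 ∈ Sk := by tauto
  have hk2 : p.2 ∈ Sk := by tauto
  obtain ⟨r'', c'', h1, h2, h3, h4, h5⟩ := hBk.2.2.2.2.2.2 p.1 hk1 p.2 hk2
  rw [Prod.mk.eta] at h5
  have hrne : r'' ≠ r := by intro he; rw [he] at h1 h2; exact hrk ⟨h1, h2⟩
  have hq' : (fun r' c' => if r' = r ∧ c' = c then some p else M r' c') r'' c''
      = some p := by simp [hrne]; exact h5
  have := hO.2.2.2.2 r c r'' c'' p hMrc hq'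
  exact hrne this.1.symm

lemma card_blk2 {n : ℕ} (b a : ℕ) (h : b + a ≤ n) :
    (Finset.univ.filter (fun rc : Fin n × Fin n =>
      (b ≤ (rc.1:ℕ) ∧ (rc.1:ℕ) < b + a) ∧ (b ≤ (rc.2:ℕ) ∧ (rc.2:ℕ) < b + a))).card
      = a * a := by
  have he : (Finset.univ.filter (fun rc : Fin n × Fin n =>
      (b ≤ (rc.1:ℕ) ∧ (rc.1:ℕ) < b + a) ∧ (b ≤ (rc.2:ℕ) ∧ (rc.2:ℕ) < b + a)))
      = (Finset.univ.filter (fun x : Fin n => b ≤ (x:ℕ) ∧ (x:ℕ) < b + a)) ×ˢ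
        (Finset.univ.filter (fun x : Fin n => b ≤ (x:ℕ) ∧ (x:ℕ) < b + a)) := by
    ext x; simp [Finset.mem_product]
  rw [he, Finset.card_product, card_blk b a h]

lemma sumsq_arith (n a₁ a₂ a₃ : ℕ) (hsum : a₁ + a₂ + a₃ = n)
    (h₁ : a₁ = n / 3 ∨ a₁ = n / 3 + 1) (h₂ : a₂ = n / 3 ∨ a₂ = n / 3 + 1)
    (h₃ : a₃ = n / 3 ∨ a₃ = n / 3 + 1) :
    a₁ * a₁ + a₂ * a₂ + a₃ * a₃ = (n ^ 2 + 2) / 3 := by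
  obtain ⟨q, r, hq, hr, hd⟩ : ∃ q r, n = 3 * q + r ∧ r < 4 ∧ n / 3 = q :=
    ⟨n / 3, n % 3, by omega, by omega, rfl⟩
  rw [hd] at h₁ h₂ h₃
  subst hq
  rcases h₁ with h1 | h1 <;> rcases h₂ with h2 | h2 <;> rcases h₃ with h3 | h3 <;>
    rw [h1, h2, h3] at hsum ⊢
  · have hr0 : r = 0 := by omega
    subst hr0
    have key : (3 * q + 0) ^ 2 + 2 = 3 * (q * q + q * q + q * q) + 2 := by ring
    rw [key]; generalize (q * q + q * q + q * q) = t; omega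
  · have hr0 : r = 1 := by omega
    subst hr0
    have key : (3 * q + 1) ^ 2 + 2 = 3 * (q * q + q * q + (q + 1) * (q + 1)) + 0 := by ring
    rw [key]; generalize (q * q + q * q + (q + 1) * (q + 1)) = t; omega
  · have hr0 : r = 1 := by omega
    subst hr0
    have key : (3 * q + 1) ^ 2 + 2 = 3 * (q * q + (q + 1) * (q + 1) + q * q) + 0 := by ring
    rw [key]; generalize (q * q + (q + 1) * (q + 1) + q * q) = t; omega
  · have hr0 : r = 2 := by omega
    subst hr0
    have key : (3 * q + 2) ^ 2 + 2 = 3 * (q * q + (q + 1) * (q + 1) + (q + 1) * (q + 1)) + 0 := by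
      ring
    rw [key]; generalize (q * q + (q + 1) * (q + 1) + (q + 1) * (q + 1)) = t; omega
  · have hr0 : r = 1 := by omega
    subst hr0
    have key : (3 * q + 1) ^ 2 + 2 = 3 * ((q + 1) * (q + 1) + q * q + q * q) + 0 := by ring
    rw [key]; generalize ((q + 1) * (q + 1) + q * q + q * q) = t; omega
  · have hr0 : r = 2 := by omega
    subst hr0
    have key : (3 * q + 2) ^ 2 + 2 = 3 * ((q + 1) * (q + 1) + q * q + (q + 1) * (q + 1)) + 0 := by
      ring
    rw [key]; generalize ((q + 1) * (q + 1) + q * q + (q + 1) * (q + 1)) = t; omega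
  · have hr0 : r = 2 := by omega
    subst hr0
    have key : (3 * q + 2) ^ 2 + 2 = 3 * ((q + 1) * (q + 1) + (q + 1) * (q + 1) + q * q) + 0 := by
      ring
    rw [key]; generalize ((q + 1) * (q + 1) + (q + 1) * (q + 1) + q * q) = t; omega
  · have hr0 : r = 3 := by omega
    subst hr0
    have key : (3 * q + 3) ^ 2 + 2
        = 3 * ((q + 1) * (q + 1) + (q + 1) * (q + 1) + (q + 1) * (q + 1)) + 2 := by ring
    rw [key]; generalize ((q + 1) * (q + 1) + (q + 1) * (q + 1) + (q + 1) * (q + 1)) = t; omega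

/-- The diagonal construction: for n ≥ 21, placing three OLSs of orders
a₁ + a₂ + a₃ = n, each aᵢ ∈ {⌊n/3⌋, ⌊n/3⌋+1}, on pairwise disjoint symbol sets
covering [n], down the leading diagonal yields a maximal OPLS(n) with ⌈n²/3⌉
filled cells. -/
theorem stmt_12 {n : ℕ} (hn : 21 ≤ n) (a₁ a₂ a₃ : ℕ)
    (hsum : a₁ + a₂ + a₃ = n)
    (h₁ : a₁ = n / 3 ∨ a₁ = n / 3 + 1) (h₂ : a₂ = n / 3 ∨ a₂ = n / 3 + 1)
    (h₃ : a₃ = n / 3 ∨ a₃ = n / 3 + 1)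
    (S₁ S₂ S₃ : Finset (Fin n)) (hcover : S₁ ∪ S₂ ∪ S₃ = Finset.univ)
    (M : Fin n → Fin n → Option (Fin n × Fin n))
    (hblocks : IsThreeBlockDiagonal M a₁ a₂ a₃ S₁ S₂ S₃) :
    IsMaximalOPLS M ∧ oplsSize M = (n ^ 2 + 2) / 3 := by
  obtain ⟨d12, d13, d23, B1, B2, B3, hloc⟩ := hblocks
  have h1n : 0 + a₁ ≤ n := by omega
  have h2n : a₁ + a₂ ≤ n := by omega
  have h3n : (a₁ + a₂) + a₃ ≤ n := by omega
  have hOPLS : IsOPLS M := by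
    refine ⟨?_, ?_, ?_, ?_, ?_⟩
    · intro r c c' p q hp hq hpq
      have hrn := r.isLt; have hcn := c.isLt; have hcn' := c'.isLt
      rcases hloc r c (by simp [hp]) with ⟨e1, e2⟩ | ⟨e1, e2, e3, e4⟩ | ⟨e1, e2⟩ <;>
        rcases hloc r c' (by simp [hq]) with ⟨g1, g2⟩ | ⟨g1, g2, g3, g4⟩ | ⟨g1, g2⟩ <;>
        first
          | exact blk_row_fst B1 h1n (by omega) (by omega) (by omega) (by omega)
              (by omega) (by omega) hp hq hpq
          | exact blk_row_fst B2 h2n (by omega) (by omega) (by omega) (by omega)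
              (by omega) (by omega) hp hq hpq
          | exact blk_row_fst B3 h3n (by omega) (by omega) (by omega) (by omega)
              (by omega) (by omega) hp hq hpq
    · intro r r' c p q hp hq hpq
      have hrn := r.isLt; have hcn := c.isLt; have hrn' := r'.isLt
      rcases hloc r c (by simp [hp]) with ⟨e1, e2⟩ | ⟨e1, e2, e3, e4⟩ | ⟨e1, e2⟩ <;>
        rcases hloc r' c (by simp [hq]) with ⟨g1, g2⟩ | ⟨g1, g2, g3, g4⟩ | ⟨g1, g2⟩ <;>
        first
          | exact blk_col_fst B1 h1n (by omega) (by omega) (by omega) (by omega)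
              (by omega) (by omega) hp hq hpq
          | exact blk_col_fst B2 h2n (by omega) (by omega) (by omega) (by omega)
              (by omega) (by omega) hp hq hpq
          | exact blk_col_fst B3 h3n (by omega) (by omega) (by omega) (by omega)
              (by omega) (by omega) hp hq hpq
    · intro r c c' p q hp hq hpq
      have hrn := r.isLt; have hcn := c.isLt; have hcn' := c'.isLt
      rcases hloc r c (by simp [hp]) with ⟨e1, e2⟩ | ⟨e1, e2, e3, e4⟩ | ⟨e1, e2⟩ <;>
        rcases hloc r c' (by simp [hq]) with ⟨g1, g2⟩ | ⟨g1, g2, g3, g4⟩ | ⟨g1, g2⟩ <;>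
        first
          | exact blk_row_snd B1 h1n (by omega) (by omega) (by omega) (by omega)
              (by omega) (by omega) hp hq hpq
          | exact blk_row_snd B2 h2n (by omega) (by omega) (by omega) (by omega)
              (by omega) (by omega) hp hq hpq
          | exact blk_row_snd B3 h3n (by omega) (by omega) (by omega) (by omega)
              (by omega) (by omega) hp hq hpq
    · intro r r' c p q hp hq hpq
      have hrn := r.isLt; have hcn := c.isLt; have hrn' := r'.isLt
      rcases hloc r c (by simp [hp]) with ⟨e1, e2⟩ | ⟨e1, e2, e3, e4⟩ | ⟨e1, e2⟩ <;>
        rcases hloc r' c (by simp [hq]) with ⟨g1, g2⟩ | ⟨g1, g2, g3, g4⟩ | ⟨g1, g2⟩ <;>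
        first
          | exact blk_col_snd B1 h1n (by omega) (by omega) (by omega) (by omega)
              (by omega) (by omega) hp hq hpq
          | exact blk_col_snd B2 h2n (by omega) (by omega) (by omega) (by omega)
              (by omega) (by omega) hp hq hpq
          | exact blk_col_snd B3 h3n (by omega) (by omega) (by omega) (by omega)
              (by omega) (by omega) hp hq hpq
    · intro r c r' c' p hp hq
      have hrn := r.isLt; have hcn := c.isLt; have hrn' := r'.isLt; have hcn' := c'.isLt
      rcases hloc r c (by simp [hp]) with ⟨e1, e2⟩ | ⟨e1, e2, e3, e4⟩ | ⟨e1, e2⟩ <;>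
        rcases hloc r' c' (by simp [hq]) with ⟨g1, g2⟩ | ⟨g1, g2, g3, g4⟩ | ⟨g1, g2⟩
      · exact blk_pair B1 h1n (by omega) (by omega) (by omega) (by omega)
          (by omega) (by omega) (by omega) (by omega) hp hq
      · exact absurd ((blk_entry B2 (by omega) (by omega) (by omega) (by omega) hq).1)
          (Finset.disjoint_left.mp d12
            ((blk_entry B1 (by omega) (by omega) (by omega) (by omega) hp).1))
      · exact absurd ((blk_entry B3 (by omega) (by omega) (by omega) (by omega) hq).1)
          (Finset.disjoint_left.mp d13
            ((blk_entry B1 (by omega) (by omega) (by omega) (by omega) hp).1))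
      · exact absurd ((blk_entry B1 (by omega) (by omega) (by omega) (by omega) hq).1)
          (Finset.disjoint_right.mp d12
            ((blk_entry B2 (by omega) (by omega) (by omega) (by omega) hp).1))
      · exact blk_pair B2 h2n (by omega) (by omega) (by omega) (by omega)
          (by omega) (by omega) (by omega) (by omega) hp hq
      · exact absurd ((blk_entry B3 (by omega) (by omega) (by omega) (by omega) hq).1)
          (Finset.disjoint_left.mp d23
            ((blk_entry B2 (by omega) (by omega) (by omega) (by omega) hp).1))
      · exact absurd ((blk_entry B1 (by omega) (by omega) (by omega) (by omega) hq).1)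
          (Finset.disjoint_right.mp d13
            ((blk_entry B3 (by omega) (by omega) (by omega) (by omega) hp).1))
      · exact absurd ((blk_entry B2 (by omega) (by omega) (by omega) (by omega) hq).1)
          (Finset.disjoint_right.mp d23
            ((blk_entry B3 (by omega) (by omega) (by omega) (by omega) hp).1))
      · exact blk_pair B3 h3n (by omega) (by omega) (by omega) (by omega)
          (by omega) (by omega) (by omega) (by omega) hp hq
  have hsize : oplsSize M = a₁ * a₁ + a₂ * a₂ + a₃ * a₃ := by
    unfold oplsSize
    have hun : Finset.univ.filter (fun rc : Fin n × Fin n => (M rc.1 rc.2).isSome)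
        = (Finset.univ.filter (fun rc : Fin n × Fin n =>
            (0 ≤ (rc.1:ℕ) ∧ (rc.1:ℕ) < 0 + a₁) ∧ (0 ≤ (rc.2:ℕ) ∧ (rc.2:ℕ) < 0 + a₁)))
          ∪ (Finset.univ.filter (fun rc : Fin n × Fin n =>
            (a₁ ≤ (rc.1:ℕ) ∧ (rc.1:ℕ) < a₁ + a₂) ∧ (a₁ ≤ (rc.2:ℕ) ∧ (rc.2:ℕ) < a₁ + a₂)))
          ∪ (Finset.univ.filter (fun rc : Fin n × Fin n =>
            (a₁ + a₂ ≤ (rc.1:ℕ) ∧ (rc.1:ℕ) < (a₁ + a₂) + a₃) ∧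
            (a₁ + a₂ ≤ (rc.2:ℕ) ∧ (rc.2:ℕ) < (a₁ + a₂) + a₃))) := by
      ext rc
      have h1 := rc.1.isLt; have h2 := rc.2.isLt
      simp only [Finset.mem_filter, Finset.mem_union, Finset.mem_univ, true_and]
      constructor
      · intro h
        rcases hloc rc.1 rc.2 h with h' | h' | h'
        · exact Or.inl (Or.inl ⟨⟨by omega, by omega⟩, by omega, by omega⟩)
        · exact Or.inl (Or.inr ⟨⟨by omega, by omega⟩, by omega, by omega⟩)
        · exact Or.inr ⟨⟨by omega, by omega⟩, by omega, by omega⟩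
      · intro h
        rcases h with (⟨⟨u1, u2⟩, u3, u4⟩ | ⟨⟨u1, u2⟩, u3, u4⟩) | ⟨⟨u1, u2⟩, u3, u4⟩
        · obtain ⟨q, hq, -, -⟩ := B1.2.1 rc.1 rc.2 u1 u2 u3 u4
          simp [hq]
        · obtain ⟨q, hq, -, -⟩ := B2.2.1 rc.1 rc.2 u1 u2 u3 u4
          simp [hq]
        · obtain ⟨q, hq, -, -⟩ := B3.2.1 rc.1 rc.2 u1 u2 u3 u4
          simp [hq]
    rw [hun]
    rw [Finset.card_union_of_disjoint, Finset.card_union_of_disjoint]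
    · rw [card_blk2 0 a₁ h1n, card_blk2 a₁ a₂ h2n, card_blk2 (a₁ + a₂) a₃ h3n]
    · rw [Finset.disjoint_left]
      intro x hx hx'
      simp only [Finset.mem_filter, Finset.mem_univ, true_and] at hx hx'
      omega
    · rw [Finset.disjoint_left]
      intro x hx hx'
      simp only [Finset.mem_filter, Finset.mem_union, Finset.mem_univ, true_and] at hx hx'
      rcases hx with hx | hx <;> omega
  refine ⟨⟨hOPLS, ?_⟩, by rw [hsize]; exact sumsq_arith n a₁ a₂ a₃ hsum h₁ h₂ h₃⟩
  intro r c p hnone hO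
  have hrn := r.isLt; have hcn := c.isLt
  have hmem1 : p.1 ∈ S₁ ∨ p.1 ∈ S₂ ∨ p.1 ∈ S₃ := by
    have : p.1 ∈ S₁ ∪ S₂ ∪ S₃ := by rw [hcover]; exact Finset.mem_univ _
    simpa [Finset.mem_union, or_assoc] using this
  have hmem2 : p.2 ∈ S₁ ∨ p.2 ∈ S₂ ∨ p.2 ∈ S₃ := by
    have : p.2 ∈ S₁ ∪ S₂ ∪ S₃ := by rw [hcover]; exact Finset.mem_univ _
    simpa [Finset.mem_union, or_assoc] using this
  have hr3 : (r:ℕ) < a₁ ∨ (a₁ ≤ (r:ℕ) ∧ (r:ℕ) < a₁ + a₂) ∨ (a₁ + a₂ ≤ (r:ℕ)) := by omega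
  have hc3 : (c:ℕ) < a₁ ∨ (a₁ ≤ (c:ℕ) ∧ (c:ℕ) < a₁ + a₂) ∨ (a₁ + a₂ ≤ (c:ℕ)) := by omega
  rcases hr3 with hr | ⟨hr, hr'⟩ | hr <;> rcases hc3 with hc | ⟨hc, hc'⟩ | hc
  · obtain ⟨q, hq, -, -⟩ := B1.2.1 r c (by omega) (by omega) (by omega) (by omega)
    rw [hnone] at hq; cases hq
  · exact insert_contra B1 B2 B3 r c p ⟨by omega, by omega⟩ ⟨by omega, by omega⟩
      (by omega) (by omega) (by omega) hmem1 hmem2 hO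
  · exact insert_contra B1 B3 B2 r c p ⟨by omega, by omega⟩ ⟨by omega, by omega⟩
      (by omega) (by omega) (by omega) (hmem1.imp id Or.symm) (hmem2.imp id Or.symm) hO
  · exact insert_contra B2 B1 B3 r c p ⟨by omega, by omega⟩ ⟨by omega, by omega⟩
      (by omega) (by omega) (by omega)
      (by rcases hmem1 with h | h | h
          exacts [Or.inr (Or.inl h), Or.inl h, Or.inr (Or.inr h)])
      (by rcases hmem2 with h | h | h
          exacts [Or.inr (Or.inl h), Or.inl h, Or.inr (Or.inr h)]) hO
  · obtain ⟨q, hq, -, -⟩ := B2.2.1 r c (by omega) (by omega) (by omega) (by omega)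
    rw [hnone] at hq; cases hq
  · exact insert_contra B2 B3 B1 r c p ⟨by omega, by omega⟩ ⟨by omega, by omega⟩
      (by omega) (by omega) (by omega)
      (by rcases hmem1 with h | h | h
          exacts [Or.inr (Or.inr h), Or.inl h, Or.inr (Or.inl h)])
      (by rcases hmem2 with h | h | h
          exacts [Or.inr (Or.inr h), Or.inl h, Or.inr (Or.inl h)]) hO
  · exact insert_contra B3 B1 B2 r c p ⟨by omega, by omega⟩ ⟨by omega, by omega⟩
      (by omega) (by omega) (by omega)
      (by rcases hmem1 with h | h | h
          exacts [Or.inr (Or.inl h), Or.inr (Or.inr h), Or.inl h])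
      (by rcases hmem2 with h | h | h
          exacts [Or.inr (Or.inl h), Or.inr (Or.inr h), Or.inl h]) hO
  · exact insert_contra B3 B2 B1 r c p ⟨by omega, by omega⟩ ⟨by omega, by omega⟩
      (by omega) (by omega) (by omega)
      (by rcases hmem1 with h | h | h
          exacts [Or.inr (Or.inr h), Or.inr (Or.inl h), Or.inl h])
      (by rcases hmem2 with h | h | h
          exacts [Or.inr (Or.inr h), Or.inr (Or.inl h), Or.inl h]) hO
  · obtain ⟨q, hq, -, -⟩ := B3.2.1 r c (by omega) (by omega) (by omega) (by omega)
    rw [hnone] at hq; cases hq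
end
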